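/- arXiv:math/0507186 — 3 statements merged into one kernel-verified Lean document; each statement's English description precedes it below -/
import Mathlib

section
/- For any subset J ⊆ S of the simple generators and any element w of a finite Coxeter group W, the element w lies in the standard parabolic subgroup W_J if and only if every cover reflection of w lies in W_J. -/
open CoxeterSystem

variable {B : Type*} [DecidableEq B] {W : Type*} [Group W] {M : CoxeterMatrix B}

/-- The standard parabolic subgroup `W_J` generated by the simple generators in `J`. -/
def CoxeterSystem.StandardParabolic (cs : CoxeterSystem M W) (J : Set B) : Subgroup W :=
  Subgroup.closure (cs.simple '' J)

/-- A parabolic subgroup: a conjugate of a standard parabolic subgroup. -/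
def CoxeterSystem.IsParabolic (cs : CoxeterSystem M W) (W' : Subgroup W) : Prop :=
  ∃ (w : W) (J : Set B), W' = (cs.StandardParabolic J).map (MulAut.conj w).toMonoidHom

/-- The set of inversions of `w`: reflections `t` with `ℓ(tw) < ℓ(w)`. -/
def CoxeterSystem.Inversions (cs : CoxeterSystem M W) (w : W) : Set W :=
  {t | cs.IsReflection t ∧ cs.length (t * w) < cs.length w}

/-- `t` is a canonical generator of `W'`: a reflection in `W'` with `I(t) ∩ W' = {t}`. -/
def CoxeterSystem.IsCanonicalGenerator (cs : CoxeterSystem M W) (W' : Subgroup W) (t : W) :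
    Prop :=
  cs.IsReflection t ∧ t ∈ W' ∧ cs.Inversions t ∩ (W' : Set W) = {t}

/-- A cover reflection of `w`: a reflection `t` with `t * w = w * s` for a descent `s` of `w`. -/
def CoxeterSystem.IsCoverReflection (cs : CoxeterSystem M W) (w t : W) : Prop :=
  cs.IsReflection t ∧ ∃ i : B, cs.IsRightDescent w i ∧ t * w = w * cs.simple i

/-- A Coxeter element: the product of the simple generators, each occurring once. -/
def CoxeterSystem.IsCoxeterElement (cs : CoxeterSystem M W) (c : W) : Prop :=
  ∃ l : List B, l.Nodup ∧ (∀ i : B, i ∈ l) ∧ cs.wordProd l = c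

/-- `s i` is initial in `c`, i.e. `ℓ(sc) < ℓ(c)`. -/
def CoxeterSystem.IsInitial (cs : CoxeterSystem M W) (i : B) (c : W) : Prop :=
  cs.length (cs.simple i * c) < cs.length c

/-- `s i` is final in `c`, i.e. `ℓ(cs) < ℓ(c)`. -/
def CoxeterSystem.IsFinal (cs : CoxeterSystem M W) (i : B) (c : W) : Prop :=
  cs.length (c * cs.simple i) < cs.length c

/-- `w` is sortable with respect to the Coxeter element `c` of the standard parabolic
subsystem on `J`: for some (equivalently, every) reduced word `l` for `c` using each letter
of `J` exactly once, there is a nested chain `K₁ ⊇ K₂ ⊇ ⋯` of subsets such that the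
concatenation `c_{K₁} c_{K₂} ⋯` is a reduced word for `w`. -/
def CoxeterSystem.IsSortableIn (cs : CoxeterSystem M W) (J : Set B) (c w : W) : Prop :=
  ∃ l : List B, l.Nodup ∧ (∀ i : B, i ∈ l ↔ i ∈ J) ∧ cs.wordProd l = c ∧
    ∃ K : List (Finset B), List.Chain' (fun A A' => A' ⊆ A) K ∧
      cs.IsReduced ((K.map (fun Ki => l.filter (fun i => i ∈ Ki))).flatten) ∧
      cs.wordProd ((K.map (fun Ki => l.filter (fun i => i ∈ Ki))).flatten) = w

/-- `w` is `c`-sortable. -/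
def CoxeterSystem.IsSortable (cs : CoxeterSystem M W) (c w : W) : Prop :=
  cs.IsSortableIn Set.univ c w

/-- The absolute length of `x`: the minimal length of a word in the reflections whose
product is `x`. -/
noncomputable def CoxeterSystem.absLength (cs : CoxeterSystem M W) (x : W) : ℕ :=
  sInf {k | ∃ l : List W, (∀ t ∈ l, cs.IsReflection t) ∧ l.length = k ∧ l.prod = x}

/-- The absolute order: `x ≤_T y` iff `ℓ_T(x) + ℓ_T(x⁻¹y) = ℓ_T(y)`. -/
def CoxeterSystem.absLeT (cs : CoxeterSystem M W) (x y : W) : Prop :=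
  cs.absLength x + cs.absLength (x⁻¹ * y) = cs.absLength y
/-! ### Auxiliary development: the reflection cocycle and strong exchange -/

namespace CoxAux

open CoxeterSystem List

variable {B : Type*} {W : Type*} [Group W] {M : CoxeterMatrix B} (cs : CoxeterSystem M W)

open Classical in
/-- The Bjorner–Brenti permutation `(t, ε) ↦ (s i * t * s i, ε + [t = s i])`. -/
noncomputable def sig (i : B) : Function.End (W × ZMod 2) :=
  fun p => (cs.simple i * p.1 * cs.simple i, p.2 + if p.1 = cs.simple i then 1 else 0)

lemma simple_mul_c (i j : B) :
    cs.simple j * (cs.simple i * cs.simple j)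
      = (cs.simple i * cs.simple j)⁻¹ * cs.simple j := by
  rw [mul_inv_rev, cs.inv_simple, cs.inv_simple]
  group

lemma invol_conj_eq_iff {a : W} (ha : a * a = 1) (x b : W) :
    a * x * a = b ↔ x = a * b * a := by
  constructor
  · rintro rfl
    rw [show a * (a * x * a) * a = a * a * x * (a * a) by group, ha, one_mul, mul_one]
  · rintro rfl
    rw [show a * (a * b * a) * a = a * a * b * (a * a) by group, ha, one_mul, mul_one]

open Classical in
lemma sig_mul_pow (i j : B) (k : ℕ) (p : W × ZMod 2) :
    (((sig cs i) * (sig cs j)) ^ k) p =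
      ((cs.simple i * cs.simple j) ^ k * p.1 * ((cs.simple i * cs.simple j)⁻¹) ^ k,
       p.2 + ∑ b ∈ Finset.range (2 * k),
          if p.1 = ((cs.simple i * cs.simple j)⁻¹) ^ b * cs.simple j then 1 else 0) := by
  set c := cs.simple i * cs.simple j with hc
  induction k generalizing p with
  | zero =>
    simp only [pow_zero, one_mul, mul_one, Nat.mul_zero, Finset.range_zero,
      Finset.sum_empty, add_zero]
    rfl
  | succ k ih =>
    have hpow : ((sig cs i * sig cs j) ^ (k+1)) p
        = ((sig cs i * sig cs j) ^ k) ((sig cs i * sig cs j) p) := by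
      rw [pow_succ]; rfl
    have hcond : (cs.simple j * p.1 * cs.simple j = cs.simple i)
        ↔ (p.1 = c⁻¹ * cs.simple j) := by
      have hcc : c⁻¹ * cs.simple j = cs.simple j * cs.simple i * cs.simple j := by
        rw [hc, mul_inv_rev, cs.inv_simple, cs.inv_simple, mul_assoc]
      rw [hcc]
      exact invol_conj_eq_iff (cs.simple_mul_simple_self j) p.1 (cs.simple i)
    have happ : (sig cs i * sig cs j) p
        = (c * p.1 * c⁻¹,
           p.2 + ((if p.1 = cs.simple j then 1 else 0)
              + (if p.1 = c⁻¹ * cs.simple j then 1 else 0))) := by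
      show sig cs i (sig cs j p) = _
      simp only [sig]
      refine Prod.ext ?_ ?_
      · show cs.simple i * (cs.simple j * p.1 * cs.simple j) * cs.simple i = c * p.1 * c⁻¹
        rw [hc, mul_inv_rev, cs.inv_simple, cs.inv_simple]; group
      · show p.2 + (if p.1 = cs.simple j then 1 else 0)
            + (if cs.simple j * p.1 * cs.simple j = cs.simple i then 1 else 0) = _
        rw [if_congr hcond rfl rfl, add_assoc]
    rw [hpow, happ, ih]
    refine Prod.ext ?_ ?_
    · show c ^ k * (c * p.1 * c⁻¹) * (c⁻¹) ^ k = c ^ (k+1) * p.1 * (c⁻¹) ^ (k+1)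
      group
    · show p.2 + ((if p.1 = cs.simple j then 1 else 0)
              + (if p.1 = c⁻¹ * cs.simple j then 1 else 0))
          + ∑ b ∈ Finset.range (2 * k),
              (if c * p.1 * c⁻¹ = (c⁻¹) ^ b * cs.simple j then 1 else 0)
        = p.2 + ∑ b ∈ Finset.range (2 * (k+1)),
              (if p.1 = (c⁻¹) ^ b * cs.simple j then 1 else 0)
      have hsummand : ∀ b : ℕ, (if c * p.1 * c⁻¹ = (c⁻¹) ^ b * cs.simple j then (1 : ZMod 2) else 0)
          = if p.1 = (c⁻¹) ^ (b + 2) * cs.simple j then 1 else 0 := by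
        intro b
        refine if_congr ?_ rfl rfl
        have key : c⁻¹ * ((c⁻¹) ^ b * cs.simple j) * c = (c⁻¹) ^ (b+2) * cs.simple j := by
          have h1 : cs.simple j * c = c⁻¹ * cs.simple j := simple_mul_c cs i j
          calc c⁻¹ * ((c⁻¹) ^ b * cs.simple j) * c
              = (c⁻¹) ^ (b+1) * (cs.simple j * c) := by rw [pow_succ]; group
            _ = (c⁻¹) ^ (b+1) * (c⁻¹ * cs.simple j) := by rw [h1]
            _ = (c⁻¹) ^ (b+2) * cs.simple j := by rw [pow_succ]; group
        constructor
        · intro h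
          have : p.1 = c⁻¹ * ((c⁻¹) ^ b * cs.simple j) * c := by
            rw [← h]; group
          rw [this, key]
        · intro h
          rw [h, ← key]; group
      have hsum : (2 : ℕ) * (k+1) = (2*k + 1) + 1 := by ring
      rw [hsum, Finset.sum_range_succ', Finset.sum_range_succ']
      simp only [hsummand]
      have hidx : ∀ b : ℕ, b + 1 + 1 = b + 2 := fun b => rfl
      simp only [hidx, pow_zero, one_mul, pow_one, zero_add]
      ring

open Classical in
lemma sig_liftable : M.IsLiftable (sig cs) := by
  intro i j
  funext p
  have h := sig_mul_pow cs i j (M i j) p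
  have hc : (cs.simple i * cs.simple j) ^ (M i j) = 1 := cs.simple_mul_simple_pow i j
  have hcinv : ((cs.simple i * cs.simple j)⁻¹) ^ (M i j) = 1 := by
    rw [inv_pow, hc, inv_one]
  have hsum : ∑ b ∈ Finset.range (2 * M i j),
      (if p.1 = ((cs.simple i * cs.simple j)⁻¹) ^ b * cs.simple j then (1 : ZMod 2) else 0) = 0 := by
    rw [two_mul, Finset.sum_range_add]
    have : ∀ b : ℕ, (if p.1 = ((cs.simple i * cs.simple j)⁻¹) ^ (M i j + b) * cs.simple j
        then (1 : ZMod 2) else 0)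
        = if p.1 = ((cs.simple i * cs.simple j)⁻¹) ^ b * cs.simple j then 1 else 0 := by
      intro b
      refine if_congr ?_ rfl rfl
      rw [pow_add, hcinv, one_mul]
    simp only [this]
    exact CharTwo.add_self_eq_zero _
  rw [h, hc, hcinv, hsum, add_zero, one_mul, mul_one]
  rfl

/-- The lifted homomorphism `W →* Function.End (W × ZMod 2)`. -/
noncomputable def phi : W →* Function.End (W × ZMod 2) :=
  cs.lift ⟨sig cs, sig_liftable cs⟩

lemma phi_simple (i : B) : phi cs (cs.simple i) = sig cs i :=
  cs.lift_apply_simple (sig_liftable cs) i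

open Classical in
/-- The mod-2 count of `t` in a list. -/
noncomputable def ncount (t : W) (l : List W) : ZMod 2 :=
  (l.map (fun x => if t = x then (1 : ZMod 2) else 0)).sum

lemma ncount_nil (t : W) : ncount t ([] : List W) = 0 := rfl

open Classical in
lemma ncount_cons (t x : W) (l : List W) :
    ncount t (x :: l) = (if t = x then 1 else 0) + ncount t l := by
  simp [ncount]

open Classical in
lemma mem_of_ncount_ne_zero {t : W} {l : List W} (h : ncount t l ≠ 0) : t ∈ l := by
  induction l with
  | nil => exact absurd rfl h
  | cons x l ih =>
    rw [ncount_cons] at h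
    by_cases hx : t = x
    · exact hx ▸ List.mem_cons_self (a := x) (l := l)
    · rw [if_neg hx, zero_add] at h
      exact List.mem_cons_of_mem x (ih h)

lemma rightInvSeq_cons (i : B) (ω : List B) :
    cs.rightInvSeq (i :: ω)
      = ((cs.wordProd ω)⁻¹ * cs.simple i * cs.wordProd ω) :: cs.rightInvSeq ω := rfl

open Classical in
lemma phi_wordProd (ω : List B) (p : W × ZMod 2) :
    phi cs (cs.wordProd ω) p
      = (cs.wordProd ω * p.1 * (cs.wordProd ω)⁻¹, p.2 + ncount p.1 (cs.rightInvSeq ω)) := by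
  induction ω generalizing p with
  | nil =>
    simp only [wordProd_nil, map_one, rightInvSeq_nil, ncount_nil, add_zero, one_mul, inv_one,
      mul_one]
    rfl
  | cons i ω ih =>
    rw [cs.wordProd_cons, map_mul]
    have : (phi cs (cs.simple i) * phi cs (cs.wordProd ω)) p
        = phi cs (cs.simple i) (phi cs (cs.wordProd ω) p) := rfl
    rw [this, ih, phi_simple]
    show (cs.simple i * (cs.wordProd ω * p.1 * (cs.wordProd ω)⁻¹) * cs.simple i,
        (p.2 + ncount p.1 (cs.rightInvSeq ω))
          + if cs.wordProd ω * p.1 * (cs.wordProd ω)⁻¹ = cs.simple i then 1 else 0) = _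
    refine Prod.ext ?_ ?_
    · show cs.simple i * (cs.wordProd ω * p.1 * (cs.wordProd ω)⁻¹) * cs.simple i
        = (cs.simple i * cs.wordProd ω) * p.1 * (cs.simple i * cs.wordProd ω)⁻¹
      rw [mul_inv_rev, cs.inv_simple]; group
    · show (p.2 + ncount p.1 (cs.rightInvSeq ω))
          + (if cs.wordProd ω * p.1 * (cs.wordProd ω)⁻¹ = cs.simple i then 1 else 0)
        = p.2 + ncount p.1 (cs.rightInvSeq (i :: ω))
      rw [rightInvSeq_cons, ncount_cons]
      have : (cs.wordProd ω * p.1 * (cs.wordProd ω)⁻¹ = cs.simple i)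
          ↔ (p.1 = (cs.wordProd ω)⁻¹ * cs.simple i * cs.wordProd ω) := by
        constructor
        · intro h
          have hp : p.1 = (cs.wordProd ω)⁻¹
              * (cs.wordProd ω * p.1 * (cs.wordProd ω)⁻¹) * cs.wordProd ω := by group
          rw [hp, h]
        · intro h; rw [h]; group
      rw [if_congr this rfl rfl]
      ring

/-- The reflection cocycle mod 2. -/
noncomputable def nn (w t : W) : ZMod 2 := (phi cs w (t, 0)).2

lemma nn_wordProd (ω : List B) (t : W) :
    nn cs (cs.wordProd ω) t = ncount t (cs.rightInvSeq ω) := by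
  unfold nn
  rw [phi_wordProd]
  simp

lemma phi_apply (w : W) (p : W × ZMod 2) :
    phi cs w p = (w * p.1 * w⁻¹, p.2 + nn cs w p.1) := by
  obtain ⟨ω, -, rfl⟩ := cs.exists_reduced_word w
  rw [phi_wordProd, nn_wordProd]

lemma nn_mul (u v t : W) :
    nn cs (u * v) t = nn cs v t + nn cs u (v * t * v⁻¹) := by
  unfold nn
  rw [map_mul]
  have : (phi cs u * phi cs v) (t, 0) = phi cs u (phi cs v (t, 0)) := rfl
  rw [this, phi_apply, phi_apply, phi_apply]
  simp

lemma nn_one (t : W) : nn cs 1 t = 0 := by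
  unfold nn
  rw [map_one]
  rfl

open Classical in
lemma nn_simple (i : B) (t : W) :
    nn cs (cs.simple i) t = if t = cs.simple i then 1 else 0 := by
  have h2 := nn_wordProd cs [i] t
  rw [show cs.wordProd [i] = cs.simple i from by rw [cs.wordProd_cons, cs.wordProd_nil, mul_one],
    show cs.rightInvSeq [i] = [cs.simple i] from by rw [rightInvSeq_cons]; simp,
    ncount_cons, ncount_nil, add_zero] at h2
  exact h2

lemma nn_inv (u t : W) : nn cs u⁻¹ (u * t * u⁻¹) = nn cs u t := by
  have h := nn_mul cs u⁻¹ u t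
  rw [inv_mul_cancel, nn_one] at h
  have h2 : nn cs u t + nn cs u⁻¹ (u * t * u⁻¹) = 0 := h.symm
  rw [add_eq_zero_iff_eq_neg, CharTwo.neg_eq] at h2
  exact h2.symm

lemma nn_reflection_self {t : W} (ht : cs.IsReflection t) : nn cs t t = 1 := by
  obtain ⟨p, j, rfl⟩ := ht
  have h1 : p * cs.simple j * p⁻¹ = p * (cs.simple j * p⁻¹) := by group
  have h2 := nn_mul cs p (cs.simple j * p⁻¹) (p * cs.simple j * p⁻¹)
  rw [← h1] at h2
  have h3 : (cs.simple j * p⁻¹) * (p * cs.simple j * p⁻¹) * (cs.simple j * p⁻¹)⁻¹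
      = cs.simple j := by
    rw [mul_inv_rev, cs.inv_simple, inv_inv,
      show cs.simple j * p⁻¹ * (p * cs.simple j * p⁻¹) * (p * cs.simple j)
        = cs.simple j * cs.simple j * cs.simple j from by group,
      cs.simple_mul_simple_self, one_mul]
  rw [h3] at h2
  have h4 := nn_mul cs (cs.simple j) p⁻¹ (p * cs.simple j * p⁻¹)
  rw [inv_inv] at h4
  have h5 : p⁻¹ * (p * cs.simple j * p⁻¹) * p = cs.simple j := by group
  have h6 : nn cs p⁻¹ (p * cs.simple j * p⁻¹) = nn cs p (cs.simple j) :=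
    nn_inv cs p (cs.simple j)
  rw [h5, h6, nn_simple, if_pos rfl] at h4
  rw [h2, h4]
  generalize nn cs p (cs.simple j) = a
  revert a
  decide

/-! #### Strong exchange -/

lemma nn_eq_one_of_isRightInversion {w t : W} (h : cs.IsRightInversion w t) :
    nn cs w t = 1 := by
  obtain ⟨ht, hlt⟩ := h
  have hw : w = (w * t) * t := by rw [mul_assoc, ht.mul_self, mul_one]
  have harg : t * t * t⁻¹ = t := by rw [ht.mul_self, one_mul, ht.inv]
  have hv : nn cs (w * t) t = 0 := by
    by_contra hne
    have h1 : nn cs (w * t) t = 1 := by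
      have : ∀ a : ZMod 2, a ≠ 0 → a = 1 := by decide
      exact this _ hne
    obtain ⟨β, hβlen, hβ⟩ := cs.exists_reduced_word (w * t)
    have hred : cs.IsReduced β := by
      show cs.length (cs.wordProd β) = β.length
      exact hβlen
    have hmem : t ∈ cs.rightInvSeq β := by
      apply mem_of_ncount_ne_zero
      rw [← nn_wordProd, ← hβ, h1]
      exact one_ne_zero
    have := (cs.isRightInversion_of_mem_rightInvSeq hred hmem).2
    rw [← hβ, mul_assoc, ht.mul_self, mul_one] at this
    omega
  calc nn cs w t = nn cs ((w * t) * t) t := by rw [← hw]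
    _ = nn cs t t + nn cs (w * t) (t * t * t⁻¹) := nn_mul cs (w * t) t t
    _ = 1 + 0 := by rw [harg, hv, nn_reflection_self cs ht]
    _ = 1 := by decide

lemma mem_rightInvSeq_of_isRightInversion {ω : List B} {t : W}
    (h : cs.IsRightInversion (cs.wordProd ω) t) : t ∈ cs.rightInvSeq ω := by
  apply mem_of_ncount_ne_zero
  rw [← nn_wordProd, nn_eq_one_of_isRightInversion cs h]
  exact one_ne_zero

lemma exists_eraseIdx_of_isRightInversion {ω : List B} {t : W}
    (h : cs.IsRightInversion (cs.wordProd ω) t) :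
    ∃ j < ω.length, cs.wordProd ω * t = cs.wordProd (ω.eraseIdx j) := by
  have hmem := mem_rightInvSeq_of_isRightInversion cs h
  obtain ⟨j, hj, hget⟩ := List.mem_iff_getElem.mp hmem
  rw [cs.length_rightInvSeq] at hj
  refine ⟨j, hj, ?_⟩
  have : t = (cs.rightInvSeq ω).getD j 1 := by
    rw [List.getD_eq_getElem _ 1 (by rw [cs.length_rightInvSeq]; exact hj), hget]
  rw [this, cs.wordProd_mul_getD_rightInvSeq]

lemma mem_leftInvSeq_of_isLeftInversion {ω : List B} {t : W}
    (h : cs.IsLeftInversion (cs.wordProd ω) t) : t ∈ cs.leftInvSeq ω := by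
  have h2 : cs.IsRightInversion (cs.wordProd ω.reverse) t := by
    rw [cs.wordProd_reverse]
    exact cs.isRightInversion_inv_iff.mpr h
  have := mem_rightInvSeq_of_isRightInversion cs h2
  rw [cs.rightInvSeq_reverse, List.mem_reverse] at this
  exact this

lemma exists_eraseIdx_of_isLeftInversion {ω : List B} {t : W}
    (h : cs.IsLeftInversion (cs.wordProd ω) t) :
    ∃ j < ω.length, t * cs.wordProd ω = cs.wordProd (ω.eraseIdx j) := by
  have hmem := mem_leftInvSeq_of_isLeftInversion cs h
  obtain ⟨j, hj, hget⟩ := List.mem_iff_getElem.mp hmem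
  rw [cs.length_leftInvSeq] at hj
  refine ⟨j, hj, ?_⟩
  have : t = (cs.leftInvSeq ω).getD j 1 := by
    rw [List.getD_eq_getElem _ 1 (by rw [cs.length_leftInvSeq]; exact hj), hget]
  rw [this, cs.getD_leftInvSeq_mul_wordProd]

/-! #### Standard parabolic subgroups -/

variable (J : Set B)

lemma wordProd_mem_closure {ω : List B} (hω : ∀ i ∈ ω, i ∈ J) :
    cs.wordProd ω ∈ Subgroup.closure (cs.simple '' J) := by
  induction ω with
  | nil => rw [cs.wordProd_nil]; exact Subgroup.one_mem _
  | cons i ω ih =>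
    rw [cs.wordProd_cons]
    exact Subgroup.mul_mem _
      (Subgroup.subset_closure ⟨i, hω i (List.mem_cons_self (a := i) (l := ω)), rfl⟩)
      (ih fun j hj => hω j (List.mem_cons_of_mem i hj))

lemma exists_word_of_mem_closure {w : W} (hw : w ∈ Subgroup.closure (cs.simple '' J)) :
    ∃ ω : List B, (∀ i ∈ ω, i ∈ J) ∧ cs.wordProd ω = w := by
  induction hw using Subgroup.closure_induction with
  | mem x hx =>
    obtain ⟨i, hi, rfl⟩ := hx
    exact ⟨[i], by simpa using hi, by rw [cs.wordProd_cons, cs.wordProd_nil, mul_one]⟩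
  | one => exact ⟨[], by simp, cs.wordProd_nil⟩
  | mul x y hx hy ihx ihy =>
    obtain ⟨ω₁, h₁, rfl⟩ := ihx
    obtain ⟨ω₂, h₂, rfl⟩ := ihy
    exact ⟨ω₁ ++ ω₂, fun i hi => (List.mem_append.mp hi).elim (h₁ i) (h₂ i),
      cs.wordProd_append ω₁ ω₂⟩
  | inv x hx ihx =>
    obtain ⟨ω, h₁, rfl⟩ := ihx
    exact ⟨ω.reverse, fun i hi => h₁ i (List.mem_reverse.mp hi), cs.wordProd_reverse ω⟩

lemma mem_closure_of_mem_leftInvSeq :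
    ∀ {ω : List B}, (∀ i ∈ ω, i ∈ J) → ∀ {t : W},
      t ∈ cs.leftInvSeq ω → t ∈ Subgroup.closure (cs.simple '' J) := by
  intro ω
  induction ω with
  | nil => intro _ t ht; simp [leftInvSeq] at ht
  | cons i ω ih =>
    intro hω t ht
    have hi : cs.simple i ∈ Subgroup.closure (cs.simple '' J) :=
      Subgroup.subset_closure ⟨i, hω i (List.mem_cons_self (a := i) (l := ω)), rfl⟩
    rw [show cs.leftInvSeq (i :: ω)
        = cs.simple i :: List.map (MulAut.conj (cs.simple i)) (cs.leftInvSeq ω) from rfl] at ht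
    rcases List.mem_cons.mp ht with rfl | hmem
    · exact hi
    · obtain ⟨x, hx, rfl⟩ := List.mem_map.mp hmem
      have hxmem := ih (fun j hj => hω j (List.mem_cons_of_mem i hj)) hx
      show cs.simple i * x * (cs.simple i)⁻¹ ∈ _
      exact Subgroup.mul_mem _ (Subgroup.mul_mem _ hi hxmem) (Subgroup.inv_mem _ hi)

/-- Deletion: every element of the standard parabolic has a reduced word with letters in `J`. -/
lemma exists_reduced_word_subset {w : W} (hw : w ∈ Subgroup.closure (cs.simple '' J)) :
    ∃ ω : List B, (∀ i ∈ ω, i ∈ J) ∧ cs.IsReduced ω ∧ cs.wordProd ω = w := by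
  obtain ⟨ω, hωJ, rfl⟩ := exists_word_of_mem_closure cs J hw
  clear hw
  generalize hn : ω.length = n
  induction n using Nat.strong_induction_on generalizing ω with
  | _ n ih =>
  by_cases hred : cs.IsReduced ω
  · exact ⟨ω, hωJ, hred, rfl⟩
  · have hne : ω ≠ [] := by
      rintro rfl
      exact hred (by simp [CoxeterSystem.IsReduced])
    have hex : ∃ k, ¬ cs.IsReduced (ω.take (k+1)) := by
      refine ⟨ω.length - 1, ?_⟩
      rwa [show ω.length - 1 + 1 = ω.length from by
        have := List.length_pos_iff.mpr hne; omega, List.take_length]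
    classical
    have hknr0 : ¬ cs.IsReduced (ω.take (Nat.find hex + 1)) := Nat.find_spec hex
    have hkmin0 : ∀ m < Nat.find hex, cs.IsReduced (ω.take (m+1)) := by
      intro m hm
      by_contra hc
      exact absurd hm (not_lt.mpr (Nat.find_le hc))
    generalize hgk : Nat.find hex = k at hknr0 hkmin0
    have hknr := hknr0
    have hkmin := hkmin0
    have hklt : k < ω.length := by
      by_contra hge
      push_neg at hge
      have h1 : ω.take (k+1) = ω := List.take_of_length_le (by omega)
      rcases Nat.eq_zero_or_pos k with hk0 | hpos
      · subst hk0
        have : ω.length = 0 := by omega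
        exact hne (List.eq_nil_of_length_eq_zero this)
      · have h2 := hkmin (k-1) (by omega)
        rw [show k - 1 + 1 = k from by omega] at h2
        have h3 : ω.take k = ω := List.take_of_length_le (by omega)
        rw [h3] at h2
        exact hknr (by rwa [h1])
    have hredk : cs.IsReduced (ω.take k) := by
      rcases Nat.eq_zero_or_pos k with hk0 | hpos
      · subst hk0; simp [CoxeterSystem.IsReduced]
      · have h2 := hkmin (k-1) (by omega)
        rwa [show k - 1 + 1 = k from by omega] at h2
    have hlen_take : (ω.take k).length = k := by
      rw [List.length_take]; omega
    have htake : ω.take (k+1) = ω.take k ++ [ω.get ⟨k, hklt⟩] := by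
      rw [← List.take_concat_get hklt, List.concat_eq_append]
      simp [List.get_eq_getElem]
    set i := ω.get ⟨k, hklt⟩ with hi
    have hπ : cs.wordProd (ω.take (k+1)) = cs.wordProd (ω.take k) * cs.simple i := by
      rw [htake, cs.wordProd_append, cs.wordProd_cons, cs.wordProd_nil, mul_one]
    have hlt : cs.length (cs.wordProd (ω.take k) * cs.simple i) < cs.length (cs.wordProd (ω.take k)) := by
      have hub := cs.length_wordProd_le (ω.take (k+1))
      rw [hπ] at hub
      have hlen1 : (ω.take (k+1)).length = k + 1 := by
        rw [List.length_take]; omega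
      rw [hlen1] at hub
      have hne2 : cs.length (cs.wordProd (ω.take k) * cs.simple i) ≠ k + 1 := by
        intro hc
        apply hknr
        show cs.length (cs.wordProd (ω.take (k+1))) = (ω.take (k+1)).length
        rw [hπ, hc, hlen1]
      have hredk' : cs.length (cs.wordProd (ω.take k)) = (ω.take k).length := hredk
      rcases cs.length_mul_simple (cs.wordProd (ω.take k)) i with h | h
      · rw [hredk', hlen_take] at h; omega
      · rw [hredk', hlen_take] at h; omega
    have hexch := exists_eraseIdx_of_isRightInversion cs
      (t := cs.simple i) (ω := ω.take k) ⟨cs.isReflection_simple i, hlt⟩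
    obtain ⟨j, hj, herase⟩ := hexch
    rw [hlen_take] at hj
    set ω' := (ω.take k).eraseIdx j ++ ω.drop (k+1) with hω'
    have hπω' : cs.wordProd ω' = cs.wordProd ω := by
      rw [hω', cs.wordProd_append, ← herase, ← hπ]
      conv_rhs => rw [← List.take_append_drop (k+1) ω]
      rw [cs.wordProd_append]
    have hJω' : ∀ i' ∈ ω', i' ∈ J := by
      intro i' hi'
      rcases List.mem_append.mp hi' with h | h
      · exact hωJ i' (List.take_subset k ω (List.eraseIdx_subset h))
      · exact hωJ i' (List.drop_subset (k+1) ω h)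
    have hlen' : ω'.length < n := by
      have he := List.length_eraseIdx_add_one (show j < (ω.take k).length from by rwa [hlen_take])
      rw [hω', List.length_append, List.length_drop]
      omega
    obtain ⟨ω'', h1, h2, h3⟩ := ih ω'.length hlen' ω' hJω' rfl
    exact ⟨ω'', h1, h2, by rw [h3, hπω']⟩

/-- Additivity of length over the coset decomposition. -/
lemma length_mul_of_minimal {y : W}
    (hy : ∀ u ∈ Subgroup.closure (cs.simple '' J), cs.length y ≤ cs.length (u * y)) :
    ∀ x ∈ Subgroup.closure (cs.simple '' J),
      cs.length (x * y) = cs.length x + cs.length y := by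
  have main : ∀ n : ℕ, ∀ x ∈ Subgroup.closure (cs.simple '' J), cs.length x = n →
      cs.length (x * y) = n + cs.length y := by
    intro n
    induction n using Nat.strong_induction_on with
    | _ n ihn =>
    intro x hx hlen
    rcases Nat.eq_zero_or_pos n with rfl | hpos
    · have : x = 1 := cs.length_eq_zero_iff.mp hlen
      rw [this, one_mul, zero_add]
    · obtain ⟨γ, hγJ, hγred, hγπ⟩ := exists_reduced_word_subset cs J hx
      have hγred' : cs.length (cs.wordProd γ) = γ.length := hγred
      have hγlen : γ.length = n := by rw [← hγred', hγπ, hlen]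
      obtain ⟨j, γ', rfl⟩ : ∃ j γ', γ = j :: γ' := by
        cases γ with
        | nil => simp at hγlen; omega
        | cons a b => exact ⟨a, b, rfl⟩
      have hγ'red : cs.IsReduced γ' := by
        have := CoxeterSystem.IsReduced.drop hγred 1
        simpa using this
      have hγ'J : ∀ i ∈ γ', i ∈ J := fun i hi => hγJ i (List.mem_cons_of_mem j hi)
      set x' := cs.wordProd γ' with hx'
      have hx'mem : x' ∈ Subgroup.closure (cs.simple '' J) := wordProd_mem_closure cs J hγ'J
      have hγ'red' : cs.length (cs.wordProd γ') = γ'.length := hγ'red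
      have hx'len : cs.length x' = n - 1 := by
        rw [hx', hγ'red']
        simp only [List.length_cons] at hγlen
        omega
      have hxeq : x = cs.simple j * x' := by rw [← hγπ, cs.wordProd_cons]
      have ihx' : cs.length (x' * y) = (n - 1) + cs.length y :=
        ihn (n-1) (by omega) x' hx'mem hx'len
      rcases cs.length_simple_mul (x' * y) j with hgood | hbad
      · rw [hxeq, mul_assoc, hgood, ihx']
        omega
      · exfalso
        have hlinv : cs.IsLeftInversion (x' * y) (cs.simple j) :=
          ⟨cs.isReflection_simple j, by omega⟩
        obtain ⟨β, hβlen, hβ⟩ := cs.exists_reduced_word y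
        set δ := γ' ++ β with hδ
        have hδπ : cs.wordProd δ = x' * y := by
          rw [hδ, cs.wordProd_append, ← hx', ← hβ]
        obtain ⟨m, hm, hmer⟩ := exists_eraseIdx_of_isLeftInversion cs (hδπ ▸ hlinv)
        rw [hδπ] at hmer
        have hsx : cs.simple j * (x' * y) = x * y := by rw [hxeq, mul_assoc]
        rw [hsx] at hmer
        have hγ'len : γ'.length = n - 1 := by
          have : (j :: γ').length = n := hγlen
          simp at this; omega
        rcases Nat.lt_or_ge m γ'.length with hml | hmg
        · rw [hδ, List.eraseIdx_append_of_lt_length hml, cs.wordProd_append, ← hβ] at hmer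
          have hxeq2 : x = cs.wordProd (γ'.eraseIdx m) := mul_right_cancel hmer
          have hub : cs.length x ≤ (γ'.eraseIdx m).length := by
            rw [hxeq2]; exact cs.length_wordProd_le _
          have hee := List.length_eraseIdx_add_one hml
          omega
        · rw [hδ, List.eraseIdx_append_of_length_le hmg, cs.wordProd_append, ← hx'] at hmer
          have hueq : (x'⁻¹ * x) * y = cs.wordProd (β.eraseIdx (m - γ'.length)) := by
            rw [mul_assoc, hmer, ← mul_assoc, inv_mul_cancel, one_mul]
          have humem : x'⁻¹ * x ∈ Subgroup.closure (cs.simple '' J) :=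
            Subgroup.mul_mem _ (Subgroup.inv_mem _ hx'mem) hx
          have hub : cs.length ((x'⁻¹ * x) * y) ≤ (β.eraseIdx (m - γ'.length)).length := by
            rw [hueq]; exact cs.length_wordProd_le _
          have hmb : m - γ'.length < β.length := by
            rw [hδ, List.length_append] at hm; omega
          have he2 := List.length_eraseIdx_add_one hmb
          have hmin := hy (x'⁻¹ * x) humem
          have hβlen' : β.length = cs.length y := by rw [hβ]; exact hβlen.symm
          omega
  intro x hx
  exact main (cs.length x) x hx rfl

end CoxAux




/-- `w ∈ W_J` iff every cover reflection of `w` lies in `W_J`. -/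
theorem mem_standardParabolic_iff_coverReflections_mem
    (cs : CoxeterSystem M W) [Finite W] (J : Set B) (w : W) :
    w ∈ cs.StandardParabolic J ↔
      ∀ t : W, cs.IsCoverReflection w t → t ∈ cs.StandardParabolic J := by
  constructor
  · intro hw t ht
    obtain ⟨htrefl, i, hdesc, heq⟩ := ht
    have hlinv : cs.IsLeftInversion w t := ⟨htrefl, by rw [heq]; exact hdesc⟩
    obtain ⟨ω, hωJ, hπ⟩ := CoxAux.exists_word_of_mem_closure cs J hw
    have hmem : t ∈ cs.leftInvSeq ω :=
      CoxAux.mem_leftInvSeq_of_isLeftInversion cs (by rwa [hπ])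
    exact CoxAux.mem_closure_of_mem_leftInvSeq cs J hωJ hmem
  · intro H
    classical
    have hex : ∃ n : ℕ, ∃ u ∈ cs.StandardParabolic J, cs.length (u * w) = n :=
      ⟨cs.length w, 1, Subgroup.one_mem _, by rw [one_mul]⟩
    obtain ⟨u₀, hu₀, hu₀len⟩ := Nat.find_spec hex
    set y := u₀ * w with hy
    have hw : w = u₀⁻¹ * y := by rw [hy]; group
    have hmin : ∀ u ∈ cs.StandardParabolic J,
        cs.length y ≤ cs.length (u * y) := by
      intro u hu
      have h2 : Nat.find hex ≤ cs.length (u * y) :=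
        Nat.find_le ⟨u * u₀, Subgroup.mul_mem _ hu hu₀, by rw [mul_assoc, ← hy]⟩
      omega
    by_cases hy1 : y = 1
    · rw [hy1, mul_one] at hw
      rw [hw]
      exact Subgroup.inv_mem _ hu₀
    · exfalso
      obtain ⟨i, hdesc⟩ := cs.exists_rightDescent_of_ne_one hy1
      have hy'lt : cs.length (y * cs.simple i) < cs.length y := hdesc
      have hmin' : ∀ u ∈ cs.StandardParabolic J,
          cs.length (y * cs.simple i) ≤ cs.length (u * (y * cs.simple i)) := by
        intro u hu
        have h1 := hmin u hu
        have e : u * (y * cs.simple i) = (u * y) * cs.simple i := by group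
        rw [e]
        rcases cs.length_mul_simple (u * y) i with h | h <;>
          rcases cs.length_mul_simple y i with h' | h' <;> omega
      have hadd := CoxAux.length_mul_of_minimal cs J hmin u₀⁻¹ (Subgroup.inv_mem _ hu₀)
      have hadd' := CoxAux.length_mul_of_minimal cs J hmin' u₀⁻¹ (Subgroup.inv_mem _ hu₀)
      have hwdesc : cs.IsRightDescent w i := by
        show cs.length (w * cs.simple i) < cs.length w
        have e1 : cs.length (w * cs.simple i)
            = cs.length u₀⁻¹ + cs.length (y * cs.simple i) := by
          rw [hw, mul_assoc]; exact hadd'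
        have e2 : cs.length w = cs.length u₀⁻¹ + cs.length y := by rw [hw]; exact hadd
        omega
      have hcov : cs.IsCoverReflection w (w * cs.simple i * w⁻¹) :=
        ⟨⟨w, i, rfl⟩, i, hwdesc, by group⟩
      have htK := H _ hcov
      have ht' : u₀ * (w * cs.simple i * w⁻¹) * u₀⁻¹ ∈ cs.StandardParabolic J :=
        Subgroup.mul_mem _ (Subgroup.mul_mem _ hu₀ htK) (Subgroup.inv_mem _ hu₀)
      have hcalc : (u₀ * (w * cs.simple i * w⁻¹) * u₀⁻¹) * y = y * cs.simple i := by
        rw [hy]; group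
      have hcontra := hmin _ ht'
      rw [hcalc] at hcontra
      omega
end

section
/- For any element w of a finite Coxeter group W, the set of cover reflections of w generates a parabolic subgroup of W, and the cover reflections of w are exactly the canonical generators of that parabolic subgroup. -/
open CoxeterSystem

variable {B : Type*} [DecidableEq B] {W : Type*} [Group W] {M : CoxeterMatrix B}

open CoxeterSystem List


namespace CoverReflAux

variable {B : Type*} {W : Type*} [Group W] {M : CoxeterMatrix B}
variable (cs : CoxeterSystem M W)

local prefix:100 "s" => cs.simple
local prefix:100 "π" => cs.wordProd
local prefix:100 "ℓ" => cs.length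
local prefix:100 "ris" => cs.rightInvSeq

theorem zmod2_cases (a : ZMod 2) : a = 0 ∨ a = 1 := by revert a; decide

theorem zmod2_two (e : ZMod 2) : e + 1 + 1 = e := by
  have h : (1 : ZMod 2) + 1 = 0 := by decide
  rw [add_assoc, h, add_zero]

open Classical in
/-- Count the occurrences of `t` in a list, valued in `ZMod 2`. -/
noncomputable def zcount (t : W) : List W → ZMod 2
  | [] => 0
  | x :: l => (if x = t then 1 else 0) + zcount t l

open Classical in
theorem zcount_nil (t : W) : zcount t ([] : List W) = 0 := rfl

open Classical in
theorem zcount_cons (t x : W) (l : List W) :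
    zcount t (x :: l) = (if x = t then 1 else 0) + zcount t l := rfl

open Classical in
theorem zcount_append (t : W) (l l' : List W) :
    zcount t (l ++ l') = zcount t l + zcount t l' := by
  induction l with
  | nil => simp [zcount_nil]
  | cons x l ih => rw [List.cons_append, zcount_cons, zcount_cons, ih, add_assoc]

theorem zcount_eq_zero_of_not_mem {t : W} {l : List W} (h : t ∉ l) : zcount t l = 0 := by
  induction l with
  | nil => rfl
  | cons x l ih =>
    rw [zcount_cons]
    rw [List.mem_cons, not_or] at h
    rw [if_neg (fun hx => h.1 hx.symm), ih h.2, add_zero]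

theorem mem_of_zcount_ne_zero {t : W} {l : List W} (h : zcount t l ≠ 0) : t ∈ l := by
  by_contra hc
  exact h (zcount_eq_zero_of_not_mem hc)

open Classical in
noncomputable def permFun (i : B) : W × ZMod 2 → W × ZMod 2 :=
  fun x => (s i * x.1 * s i, x.2 + if x.1 = s i then 1 else 0)

theorem simple_conj_eq_iff (i : B) (t : W) : (s i * t * s i = s i) ↔ (t = s i) := by
  constructor
  · intro h
    calc t = (s i * s i) * t * (s i * s i) := by rw [cs.simple_mul_simple_self]; group
    _ = s i * (s i * t * s i) * s i := by group
    _ = s i * s i * s i := by rw [h]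
    _ = s i := by rw [cs.simple_mul_simple_self, one_mul]
  · rintro rfl
    rw [cs.simple_mul_simple_self, one_mul]

theorem permFun_involutive (i : B) : Function.Involutive (permFun cs i) := by
  rintro ⟨t, e⟩
  have h1 : s i * (s i * t * s i) * s i = t := by
    calc s i * (s i * t * s i) * s i = (s i * s i) * t * (s i * s i) := by group
    _ = t := by rw [cs.simple_mul_simple_self]; group
  by_cases h : t = s i
  · subst h
    have hs : s i * s i * s i = s i := by rw [cs.simple_mul_simple_self, one_mul]
    have step1 : permFun cs i (s i, e) = (s i, e + 1) := by
      simp only [permFun, if_pos rfl]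
      exact Prod.ext hs rfl
    show permFun cs i (permFun cs i (s i, e)) = (s i, e)
    rw [step1]
    simp only [permFun, if_pos rfl]
    exact Prod.ext hs (zmod2_two e)
  · have h2 : ¬ (s i * t * s i = s i) := fun hc => h ((simple_conj_eq_iff cs i t).mp hc)
    simp only [permFun, if_neg h, if_neg h2, add_zero]
    exact Prod.ext h1 (by simp [h2])

/-- The permutation of `W × ZMod 2` attached to the simple generator `i`. -/
noncomputable def perm (i : B) : Equiv.Perm (W × ZMod 2) :=
  (permFun_involutive cs i).toPerm

open Classical in
theorem perm_apply (i : B) (x : W × ZMod 2) :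
    perm cs i x = (s i * x.1 * s i, x.2 + if x.1 = s i then 1 else 0) := by
  show permFun cs i x = _
  simp [permFun]

open Classical in
/-- Main formula: the product of the permutations along a word. -/
theorem prod_map_perm (ω : List B) (t : W) (e : ZMod 2) :
    ((ω.map (perm cs)).prod) (t, e) =
      (π ω * t * (π ω)⁻¹, e + zcount t (ris ω)) := by
  induction ω generalizing t e with
  | nil => simp [wordProd_nil, zcount_nil]
  | cons i ω ih =>
    rw [List.map_cons, List.prod_cons, Equiv.Perm.mul_apply, ih, perm_apply]
    show (_, _) = _
    have harg : ((π ω * t * (π ω)⁻¹ = s i)) ↔ ((π ω)⁻¹ * s i * π ω = t) := by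
      constructor
      · rintro h; rw [← h]; group
      · rintro rfl; group
    refine Prod.ext ?_ ?_
    · show s i * (π ω * t * (π ω)⁻¹) * s i = π (i :: ω) * t * (π (i :: ω))⁻¹
      rw [cs.wordProd_cons, mul_inv_rev, cs.inv_simple]
      group
    · show e + zcount t (ris ω) + (if π ω * t * (π ω)⁻¹ = s i then 1 else 0) = _
      rw [rightInvSeq, zcount_cons]
      by_cases hc : (π ω)⁻¹ * s i * π ω = t
      · rw [if_pos hc, if_pos (harg.mpr hc)]
        ring
      · rw [if_neg hc, if_neg (fun hx => hc (harg.mp hx))]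
        ring

theorem zmod2_add_self (a : ZMod 2) : a + a = 0 := by revert a; decide

theorem pow_shift (a b : W) (q : ℕ) : a * (b * a) ^ q * b = (a * b) ^ (q + 1) := by
  induction q with
  | zero => simp
  | succ q ih =>
    calc a * (b * a) ^ (q + 1) * b = (a * (b * a) ^ q * b) * (a * b) := by
          rw [pow_succ]; group
    _ = (a * b) ^ (q + 1) * (a * b) := by rw [ih]
    _ = (a * b) ^ (q + 2) := by rw [← pow_succ]

theorem conj_alt (i j : B) (q : ℕ) :
    s j * π (alternatingWord j i (2 * q + 1)) * s j = π (alternatingWord i j (2 * q + 3)) := by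
  have h1 : ¬ Even (2 * q + 1) := by simp [Nat.even_add_one, Nat.even_mul]
  have h2 : ¬ Even (2 * q + 3) := by
    rw [Nat.even_iff]
    omega
  rw [cs.prod_alternatingWord_eq_mul_pow, cs.prod_alternatingWord_eq_mul_pow,
    if_neg h1, if_neg h2]
  have hq1 : (2 * q + 1) / 2 = q := by omega
  have hq3 : (2 * q + 3) / 2 = q + 1 := by omega
  rw [hq1, hq3]
  calc s j * (s i * (s j * s i) ^ q) * s j = s j * (s i * (s j * s i) ^ q * s j) := by group
  _ = s j * (s i * s j) ^ (q + 1) := by rw [pow_shift]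

theorem ris_alternatingWord (i j : B) (m : ℕ) :
    ris (alternatingWord i j m) =
      (List.range m).map (fun k => π (alternatingWord i j (2 * (m - k) - 1))) := by
  induction m generalizing i j with
  | zero => simp [alternatingWord]
  | succ m ih =>
    rw [alternatingWord_succ, cs.rightInvSeq_concat, ih j i]
    rw [List.range_succ, List.map_append, List.map_map, List.concat_eq_append]
    congr 1
    · apply List.map_congr_left
      intro k hk
      rw [List.mem_range] at hk
      have hq : 2 * (m - k) - 1 = 2 * (m - k - 1) + 1 := by omega
      have hq' : 2 * (m + 1 - k) - 1 = 2 * (m - k - 1) + 3 := by omega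
      simp only [Function.comp_apply, MulAut.conj_apply, cs.inv_simple]
      rw [hq, hq', conj_alt]
    · simp only [List.map_cons, List.map_nil]
      have : 2 * (m + 1 - m) - 1 = 1 := by omega
      rw [this]
      simp [alternatingWord_succ, alternatingWord]

theorem prod_alt_period (i j : B) (n : ℕ) :
    π (alternatingWord i j (n + 2 * M i j)) = π (alternatingWord i j n) := by
  rw [cs.prod_alternatingWord_eq_mul_pow, cs.prod_alternatingWord_eq_mul_pow]
  have he : Even (n + 2 * M i j) ↔ Even n := by
    rw [Nat.even_add]
    simp [Nat.even_mul]
  have hd : (n + 2 * M i j) / 2 = n / 2 + M i j := by omega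
  rw [hd, pow_add, cs.simple_mul_simple_pow, mul_one]
  by_cases h : Even n
  · rw [if_pos h, if_pos (he.mpr h)]
  · rw [if_neg h, if_neg (fun hc => h (he.mp hc))]

theorem zcount_ris_braid (i j : B) (t : W) :
    zcount t (ris (alternatingWord i j (2 * M i j))) = 0 := by
  set m := M i j with hm
  rw [ris_alternatingWord]
  have : List.range (2 * m) = List.range m ++ (List.range m).map (fun x => m + x) := by
    rw [two_mul, List.range_add]
  rw [this, List.map_append, List.map_map, zcount_append]
  have heq : (List.range m).map ((fun k => π (alternatingWord i j (2 * (2 * m - k) - 1)))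
        ∘ (fun x => m + x)) =
      (List.range m).map (fun k => π (alternatingWord i j (2 * (2 * m - k) - 1))) := by
    apply List.map_congr_left
    intro k hk
    rw [List.mem_range] at hk
    simp only [Function.comp_apply]
    have h1 : 2 * (2 * m - (m + k)) - 1 = 2 * (m - k) - 1 := by omega
    have h2 : 2 * (2 * m - k) - 1 = (2 * (m - k) - 1) + 2 * m := by omega
    rw [h1, h2, hm, prod_alt_period]
  rw [heq, zmod2_add_self]

theorem prod_braid_eq_one (i j : B) : π (alternatingWord i j (2 * M i j)) = 1 := by
  rw [cs.prod_alternatingWord_eq_mul_pow]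
  have he : Even (2 * M i j) := ⟨M i j, by omega⟩
  have hd : (2 * M i j) / 2 = M i j := by omega
  rw [if_pos he, hd, cs.simple_mul_simple_pow, one_mul]

theorem perm_pow_eq_prod (i j : B) (k : ℕ) :
    (perm cs i * perm cs j) ^ k = ((alternatingWord i j (2 * k)).map (perm cs)).prod := by
  induction k with
  | zero => simp [alternatingWord]
  | succ k ih =>
    have hw : alternatingWord i j (2 * (k + 1))
        = ((alternatingWord i j (2 * k)).concat i).concat j := by
      have h1 : 2 * (k + 1) = (2 * k + 1) + 1 := by omega
      rw [h1, alternatingWord_succ, alternatingWord_succ]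
    rw [hw, List.concat_eq_append, List.concat_eq_append, List.map_append, List.map_append,
      List.prod_append, List.prod_append, ← ih]
    simp [pow_succ, mul_assoc]

theorem perm_liftable : CoxeterMatrix.IsLiftable M (perm cs) := by
  intro i j
  rw [perm_pow_eq_prod]
  apply Equiv.ext
  rintro ⟨t, e⟩
  rw [prod_map_perm, prod_braid_eq_one, zcount_ris_braid]
  simp

/-- The parity representation of the Coxeter group. -/
noncomputable def prep : W →* Equiv.Perm (W × ZMod 2) :=
  cs.lift ⟨perm cs, perm_liftable cs⟩

/-- `eta cs x t` is the parity of the number of occurrences of `t` in the right inversion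
sequence of any word for `x`. -/
noncomputable def eta (x t : W) : ZMod 2 := ((prep cs x) (t, 0)).2

theorem prep_wordProd (ω : List B) : prep cs (π ω) = (ω.map (perm cs)).prod := by
  induction ω with
  | nil => simp [wordProd_nil]
  | cons i ω ih =>
    rw [cs.wordProd_cons, map_mul, ih, List.map_cons, List.prod_cons]
    congr 1
    exact cs.lift_apply_simple (perm_liftable cs) i

theorem eta_eq_zcount {x : W} {ω : List B} (h : π ω = x) (t : W) :
    eta cs x t = zcount t (ris ω) := by
  rw [eta, ← h, prep_wordProd, prod_map_perm, zero_add]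

theorem prep_apply (x t : W) (e : ZMod 2) :
    prep cs x (t, e) = (x * t * x⁻¹, e + eta cs x t) := by
  obtain ⟨ω, hω⟩ := cs.wordProd_surjective x
  rw [← hω, prep_wordProd, prod_map_perm, eta_eq_zcount cs (rfl : π ω = π ω)]

theorem zmod2_eq_of_add_eq_zero {a b : ZMod 2} (h : a + b = 0) : a = b := by
  revert h; revert a b; decide

theorem zmod2_aux (a : ZMod 2) : a + (1 + a) = 1 := by revert a; decide

theorem eta_mul (x y t : W) : eta cs (x * y) t = eta cs y t + eta cs x (y * t * y⁻¹) := by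
  have h1 : prep cs (x * y) (t, 0) = ((x * y) * t * (x * y)⁻¹, 0 + eta cs (x * y) t) :=
    prep_apply cs (x * y) t 0
  have h2 : prep cs (x * y) (t, 0)
      = (x * (y * t * y⁻¹) * x⁻¹, (0 + eta cs y t) + eta cs x (y * t * y⁻¹)) := by
    rw [map_mul]
    show prep cs x (prep cs y (t, 0)) = _
    rw [prep_apply, prep_apply]
  have := congrArg Prod.snd (h1.symm.trans h2)
  simpa using this

theorem eta_one (t : W) : eta cs 1 t = 0 := by
  simp [eta, map_one]

open Classical in
theorem eta_simple (i : B) (t : W) : eta cs (s i) t = if s i = t then 1 else 0 := by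
  have hw : π [i] = s i := cs.wordProd_singleton i
  rw [eta_eq_zcount cs hw]
  have : ris [i] = [s i] := by
    show ((π [])⁻¹ * s i * π []) :: ris [] = [s i]
    rw [cs.wordProd_nil, rightInvSeq]
    group
  rw [this, zcount_cons, zcount_nil, add_zero]

theorem eta_inv (x t : W) : eta cs x⁻¹ t = eta cs x (x⁻¹ * t * x) := by
  have h := eta_mul cs x x⁻¹ t
  rw [mul_inv_cancel, eta_one, inv_inv] at h
  exact zmod2_eq_of_add_eq_zero h.symm

theorem eta_refl_self {t : W} (ht : cs.IsReflection t) : eta cs t t = 1 := by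
  obtain ⟨u, i, rfl⟩ := ht
  set t := u * s i * u⁻¹ with hdef
  have hconj : u⁻¹ * t * u = s i := by rw [hdef]; group
  have h1 : eta cs t t = eta cs u⁻¹ t + eta cs (u * s i) (u⁻¹ * t * u) := by
    have : t = (u * s i) * u⁻¹ := hdef
    calc eta cs t t = eta cs ((u * s i) * u⁻¹) t := by rw [← this]
    _ = eta cs u⁻¹ t + eta cs (u * s i) (u⁻¹ * t * (u⁻¹)⁻¹) := eta_mul cs _ _ _
    _ = eta cs u⁻¹ t + eta cs (u * s i) (u⁻¹ * t * u) := by rw [inv_inv]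
  have h2 : eta cs (u * s i) (s i) = 1 + eta cs u (s i) := by
    have hsi : s i * s i * (s i)⁻¹ = s i := by group
    rw [eta_mul cs u (s i) (s i), hsi, eta_simple, if_pos rfl]
  have h3 : eta cs u⁻¹ t = eta cs u (s i) := by rw [eta_inv, hconj]
  rw [h1, hconj, h2, h3, zmod2_aux]

theorem eta_eq_one_iff {t : W} (ht : cs.IsReflection t) (x : W) :
    eta cs x t = 1 ↔ ℓ (x * t) < ℓ x := by
  have fwd : ∀ y : W, eta cs y t = 1 → ℓ (y * t) < ℓ y := by
    intro y hy
    obtain ⟨ω, hred, hw⟩ := cs.exists_reduced_word' y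
    have hz : zcount t (ris ω) = 1 := by rw [← eta_eq_zcount cs hw.symm]; exact hy
    have hmem : t ∈ ris ω := mem_of_zcount_ne_zero (by rw [hz]; decide)
    have hinv := cs.isRightInversion_of_mem_rightInvSeq hred hmem
    rw [← hw] at hinv
    exact hinv.2
  constructor
  · exact fwd x
  · intro hlt
    have key : eta cs x t = 1 + eta cs (x * t) t := by
      have h1 : x = (x * t) * t := by rw [mul_assoc, ht.mul_self, mul_one]
      have h2 : t * t * t⁻¹ = t := by rw [ht.mul_self, one_mul, ht.inv]
      calc eta cs x t = eta cs ((x * t) * t) t := by rw [← h1]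
      _ = eta cs t t + eta cs (x * t) (t * t * t⁻¹) := eta_mul cs _ _ _
      _ = 1 + eta cs (x * t) t := by rw [eta_refl_self cs ht, h2]
    rcases zmod2_cases (eta cs (x * t) t) with h0 | h1
    · rw [key, h0, add_zero]
    · exfalso
      have := fwd (x * t) h1
      rw [mul_assoc, ht.mul_self, mul_one] at this
      omega

theorem eta_conj (a x t : W) :
    eta cs (a * x * a⁻¹) (a * t * a⁻¹)
      = eta cs x t + eta cs a t + eta cs a (x * t * x⁻¹) := by
  set u := a * t * a⁻¹ with hu
  have hut : a⁻¹ * u * a = t := by rw [hu]; group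
  have h1 : eta cs (a * x * a⁻¹) u = eta cs a⁻¹ u + eta cs (a * x) t := by
    have : a * x * a⁻¹ = (a * x) * a⁻¹ := by group
    rw [this, eta_mul cs (a * x) a⁻¹ u, inv_inv, hut]
  have h2 : eta cs (a * x) t = eta cs x t + eta cs a (x * t * x⁻¹) := eta_mul cs a x t
  have h3 : eta cs a⁻¹ u = eta cs a t := by rw [eta_inv, hut]
  rw [h1, h2, h3]
  ring

/-! ### Parabolic subgroup lemmas -/

section Parabolic

variable (J : Set B)

theorem exists_word_of_mem {x : W} (hx : x ∈ Subgroup.closure (cs.simple '' J)) :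
    ∃ ω : List B, (∀ i ∈ ω, i ∈ J) ∧ π ω = x := by
  induction hx using Subgroup.closure_induction with
  | mem g hg =>
    obtain ⟨i, hi, rfl⟩ := hg
    exact ⟨[i], by simpa using hi, cs.wordProd_singleton i⟩
  | one => exact ⟨[], by simp, cs.wordProd_nil⟩
  | mul a b ha hb iha ihb =>
    obtain ⟨ω₁, h1, h2⟩ := iha
    obtain ⟨ω₂, h3, h4⟩ := ihb
    refine ⟨ω₁ ++ ω₂, ?_, by rw [cs.wordProd_append, h2, h4]⟩
    intro i hi
    rcases List.mem_append.mp hi with h | h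
    · exact h1 i h
    · exact h3 i h
  | inv a ha iha =>
    obtain ⟨ω, h1, h2⟩ := iha
    exact ⟨ω.reverse, fun i hi => h1 i (List.mem_reverse.mp hi),
      by rw [cs.wordProd_reverse, h2]⟩

theorem isReduced_nil : cs.IsReduced ([] : List B) := by
  show ℓ (π ([] : List B)) = ([] : List B).length
  simp

theorem exists_reduced_subword : ∀ (n : ℕ) (ω : List B), ω.length = n →
    ∃ ω' : List B, (∀ i ∈ ω', i ∈ ω) ∧ cs.IsReduced ω' ∧ π ω' = π ω := by
  intro n
  induction n using Nat.strong_induction_on with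
  | _ n ih =>
    intro ω hlen
    by_cases hred : cs.IsReduced ω
    · exact ⟨ω, fun i h => h, hred, rfl⟩
    · classical
      have hω : ω ≠ [] := by
        rintro rfl
        exact hred (isReduced_nil cs)
      have hex : ∃ k, ¬ cs.IsReduced (ω.take (k + 1)) := by
        refine ⟨ω.length - 1, ?_⟩
        have h1 : ω.length - 1 + 1 = ω.length :=
          Nat.sub_add_cancel (List.length_pos_iff.mpr hω)
        rw [h1, List.take_length]
        exact hred
      set k := Nat.find hex with hkdef
      have hknot : ¬ cs.IsReduced (ω.take (k + 1)) := Nat.find_spec hex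
      have hkred : cs.IsReduced (ω.take k) := by
        rcases Nat.eq_zero_or_pos k with h0 | hpos
        · rw [h0]
          exact isReduced_nil cs
        · have hlt : k - 1 < k := by omega
          have := Nat.find_min hex (by rw [← hkdef]; exact hlt)
          have h1 : k - 1 + 1 = k := by omega
          rw [h1] at this
          exact not_not.mp this
      have hklt : k < ω.length := by
        by_contra hge
        push_neg at hge
        have h1 : ω.take (k + 1) = ω := List.take_of_length_le (by omega)
        have h2 : ω.take k = ω := List.take_of_length_le hge
        rw [h1] at hknot
        rw [h2] at hkred
        exact hknot hkred
      have htake : ω.take (k + 1) = ω.take k ++ [ω[k]] := by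
        rw [List.take_succ, List.getElem?_eq_getElem hklt]
        rfl
      have hπtake : π (ω.take (k + 1)) = π (ω.take k) * s (ω[k]) := by
        rw [htake, cs.wordProd_append, cs.wordProd_singleton]
      have hlen_take : (ω.take k).length = k := by
        rw [List.length_take]
        omega
      have hLtk : ℓ (π (ω.take k)) = k := by
        have h : ℓ (π (ω.take k)) = (ω.take k).length := hkred
        rwa [hlen_take] at h
      have hdesc : ℓ (π (ω.take k) * s (ω[k])) < k := by
        have h1 : ℓ (π (ω.take (k + 1))) ≤ k + 1 := by
          have := cs.length_wordProd_le (ω.take (k + 1))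
          rwa [List.length_take, min_eq_left (by omega)] at this
        have h2 : ℓ (π (ω.take (k + 1))) ≠ k + 1 := by
          intro hc
          apply hknot
          show ℓ (π (ω.take (k + 1))) = (ω.take (k + 1)).length
          rw [List.length_take, min_eq_left (by omega)]
          exact hc
        have h3 : ℓ (π (ω.take k) * s (ω[k])) ≠ ℓ (π (ω.take k)) :=
          cs.length_mul_simple_ne _ _
        rw [hπtake] at h1 h2
        omega
      have heta : eta cs (π (ω.take k)) (s (ω[k])) = 1 := by
        rw [eta_eq_one_iff cs (cs.isReflection_simple _)]
        rw [hLtk]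
        exact hdesc
      have hz : zcount (s (ω[k])) (ris (ω.take k)) = 1 := by
        rw [← eta_eq_zcount cs (rfl : π (ω.take k) = π (ω.take k))]
        exact heta
      have hmem : s (ω[k]) ∈ ris (ω.take k) := mem_of_zcount_ne_zero (by rw [hz]; decide)
      obtain ⟨l, hl, hgl⟩ := List.mem_iff_getElem.mp hmem
      have hl' : l < k := by
        rwa [cs.length_rightInvSeq, hlen_take] at hl
      have herase : π (ω.take k) * s (ω[k]) = π ((ω.take k).eraseIdx l) := by
        rw [← hgl, ← List.getD_eq_getElem _ 1 hl]
        exact cs.wordProd_mul_getD_rightInvSeq _ _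
      refine ?_
      set ω'' := (ω.take k).eraseIdx l ++ ω.drop (k + 1) with hω''
      have hprod : π ω'' = π ω := by
        rw [hω'', cs.wordProd_append, ← herase, ← hπtake, ← cs.wordProd_append,
          List.take_append_drop]
      have hsub : ∀ i ∈ ω'', i ∈ ω := by
        intro i hi
        rcases List.mem_append.mp hi with h | h
        · exact (List.take_sublist k ω).subset ((List.eraseIdx_sublist _ l).subset h)
        · exact (List.drop_sublist (k + 1) ω).subset h
      have hlen'' : ω''.length < n := by
        rw [hω'', List.length_append]
        have h1 : ((ω.take k).eraseIdx l).length + 1 = (ω.take k).length :=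
          List.length_eraseIdx_add_one (by rw [hlen_take]; exact hl')
        have h2 : (ω.drop (k + 1)).length = ω.length - (k + 1) := List.length_drop
        omega
      obtain ⟨ω', h1, h2, h3⟩ := ih ω''.length hlen'' ω'' rfl
      exact ⟨ω', fun i hi => hsub i (h1 i hi), h2, h3.trans hprod⟩

theorem exists_reduced_word_of_mem {x : W} (hx : x ∈ Subgroup.closure (cs.simple '' J)) :
    ∃ ω : List B, (∀ i ∈ ω, i ∈ J) ∧ cs.IsReduced ω ∧ π ω = x := by
  obtain ⟨ω, hsub, hπ⟩ := exists_word_of_mem cs J hx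
  obtain ⟨ω', h1, h2, h3⟩ := exists_reduced_subword cs ω.length ω rfl
  exact ⟨ω', fun i hi => hsub i (h1 i hi), h2, h3.trans hπ⟩

theorem wordProd_mem {ω : List B} (h : ∀ i ∈ ω, i ∈ J) :
    π ω ∈ Subgroup.closure (cs.simple '' J) := by
  induction ω with
  | nil => rw [cs.wordProd_nil]; exact one_mem _
  | cons i ω ih =>
    rw [cs.wordProd_cons]
    exact mul_mem (Subgroup.subset_closure ⟨i, h i (by simp), rfl⟩)
      (ih (fun j hj => h j (by simp [hj])))

theorem ris_mem {ω : List B} (h : ∀ i ∈ ω, i ∈ J) :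
    ∀ t ∈ ris ω, t ∈ Subgroup.closure (cs.simple '' J) := by
  induction ω with
  | nil => simp
  | cons i ω ih =>
    intro t ht
    rcases List.mem_cons.mp ht with rfl | hmem
    · have hπ : π ω ∈ Subgroup.closure (cs.simple '' J) :=
        wordProd_mem cs J (fun j hj => h j (by simp [hj]))
      exact mul_mem (mul_mem (inv_mem hπ)
        (Subgroup.subset_closure ⟨i, h i (by simp), rfl⟩)) hπ
    · exact ih (fun j hj => h j (by simp [hj])) t hmem

variable [Finite W]

theorem eq_one_of_no_descent {x : W} (hx : x ∈ Subgroup.closure (cs.simple '' J))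
    (h : ∀ j ∈ J, ¬ ℓ (x * s j) < ℓ x) : x = 1 := by
  obtain ⟨ω, hsub, hred, hπ⟩ := exists_reduced_word_of_mem cs J hx
  rcases List.eq_nil_or_concat ω with rfl | ⟨ω', j, rfl⟩
  · rw [← hπ, cs.wordProd_nil]
  · exfalso
    have hj : j ∈ J := hsub j (by simp)
    apply h j hj
    have hxj : x * s j = π ω' := by
      rw [← hπ, cs.wordProd_concat, cs.simple_mul_simple_cancel_right]
    rw [hxj, ← hπ]
    have h1 : ℓ (π ω') ≤ ω'.length := cs.length_wordProd_le ω'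
    have h2 : ℓ (π (ω'.concat j)) = ω'.length + 1 := by
      have h : ℓ (π (ω'.concat j)) = (ω'.concat j).length := hred
      rwa [List.length_concat] at h
    omega

theorem eta_eq_one_of_all_descents {v : W} (hv : v ∈ Subgroup.closure (cs.simple '' J))
    (hd : ∀ j ∈ J, ℓ (v * s j) < ℓ v)
    {z : W} (hz : z ∈ Subgroup.closure (cs.simple '' J)) (hzr : cs.IsReflection z) :
    eta cs v z = 1 := by
  obtain ⟨m, hm, hmax⟩ := Set.exists_max_image (Subgroup.closure (cs.simple '' J) : Set W)
    cs.length (Set.toFinite _) ⟨1, one_mem _⟩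
  have hmz : ∀ z', z' ∈ Subgroup.closure (cs.simple '' J) → cs.IsReflection z' →
      eta cs m z' = 1 := by
    intro z' h1 h2
    rw [eta_eq_one_iff cs h2]
    have hmem : m * z' ∈ Subgroup.closure (cs.simple '' J) := mul_mem hm h1
    have hle : ℓ (m * z') ≤ ℓ m := hmax _ hmem
    have hne : ℓ (m * z') ≠ ℓ m := h2.length_mul_left_ne m
    omega
  set x := m⁻¹ * v with hx
  have hxJ : x ∈ Subgroup.closure (cs.simple '' J) := mul_mem (inv_mem hm) hv
  have hform : ∀ t, cs.IsReflection t → t ∈ Subgroup.closure (cs.simple '' J) →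
      eta cs v t = eta cs x t + 1 := by
    intro t htr htJ
    have hv' : v = m * x := by rw [hx]; group
    rw [hv', eta_mul cs m x t]
    have hrefl : cs.IsReflection (x * t * x⁻¹) := htr.conj x
    have hmemJ : x * t * x⁻¹ ∈ Subgroup.closure (cs.simple '' J) :=
      mul_mem (mul_mem hxJ htJ) (inv_mem hxJ)
    rw [hmz _ hmemJ hrefl]
  have hxone : x = 1 := by
    apply eq_one_of_no_descent cs J hxJ
    intro j hj hlt
    have h1 : eta cs x (s j) = 1 :=
      (eta_eq_one_iff cs (cs.isReflection_simple j) x).mpr hlt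
    have h2 : eta cs v (s j) = 1 :=
      (eta_eq_one_iff cs (cs.isReflection_simple j) v).mpr (hd j hj)
    have h3 := hform (s j) (cs.isReflection_simple j)
      (Subgroup.subset_closure ⟨j, hj, rfl⟩)
    rw [h1, h2] at h3
    exact absurd h3 (by decide)
  have hvm : v = m := by
    have : m * x = v := by rw [hx]; group
    rw [← this, hxone, mul_one]
  rw [hvm]
  exact hmz z hz hzr

theorem eta_eq_one_of_descents {w : W}
    (hJ : ∀ j ∈ J, ℓ (w * s j) < ℓ w)
    {z : W} (hz : z ∈ Subgroup.closure (cs.simple '' J)) (hzr : cs.IsReflection z) :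
    eta cs w z = 1 := by
  obtain ⟨u, hu, humin⟩ := Set.exists_min_image {x : W | w⁻¹ * x ∈ Subgroup.closure (cs.simple '' J)}
    cs.length (Set.toFinite _)
    ⟨w, show w⁻¹ * w ∈ Subgroup.closure (cs.simple '' J) by
      rw [inv_mul_cancel]; exact one_mem _⟩
  have hu' : w⁻¹ * u ∈ Subgroup.closure (cs.simple '' J) := hu
  set v := u⁻¹ * w with hv
  have hvJ : v ∈ Subgroup.closure (cs.simple '' J) := by
    have : (w⁻¹ * u)⁻¹ ∈ Subgroup.closure (cs.simple '' J) := inv_mem hu'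
    rwa [mul_inv_rev, inv_inv] at this
  have hw' : w = u * v := by rw [hv]; group
  have hmin0 : ∀ z', z' ∈ Subgroup.closure (cs.simple '' J) → cs.IsReflection z' →
      eta cs u z' = 0 := by
    intro z' h1 h2
    rcases zmod2_cases (eta cs u z') with h0 | h1'
    · exact h0
    · exfalso
      have hlt := (eta_eq_one_iff cs h2 u).mp h1'
      have hmem : u * z' ∈ {x : W | w⁻¹ * x ∈ Subgroup.closure (cs.simple '' J)} :=
        show w⁻¹ * (u * z') ∈ Subgroup.closure (cs.simple '' J) by
          rw [← mul_assoc]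
          exact mul_mem hu' h1
      have := humin _ hmem
      omega
  have hkey : ∀ t, cs.IsReflection t → t ∈ Subgroup.closure (cs.simple '' J) →
      eta cs w t = eta cs v t := by
    intro t htr htJ
    rw [hw', eta_mul cs u v t]
    have hrefl : cs.IsReflection (v * t * v⁻¹) := htr.conj v
    have hmemJ : v * t * v⁻¹ ∈ Subgroup.closure (cs.simple '' J) :=
      mul_mem (mul_mem hvJ htJ) (inv_mem hvJ)
    rw [hmin0 _ hmemJ hrefl, add_zero]
  have hvd : ∀ j ∈ J, ℓ (v * s j) < ℓ v := by
    intro j hj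
    rw [← eta_eq_one_iff cs (cs.isReflection_simple j) v]
    rw [← hkey (s j) (cs.isReflection_simple j) (Subgroup.subset_closure ⟨j, hj, rfl⟩)]
    exact (eta_eq_one_iff cs (cs.isReflection_simple j) w).mpr (hJ j hj)
  rw [hkey z hzr hz]
  exact eta_eq_one_of_all_descents cs J hvJ hvd hz hzr

end Parabolic

/-! ### Final assembly lemmas -/

section Main

variable [Finite W]

theorem length_mul_comm_of_reflections {t x : W} (ht : cs.IsReflection t)
    (hx : cs.IsReflection x) : ℓ (x * t) = ℓ (t * x) := by
  rw [← cs.length_inv (t * x), mul_inv_rev, ht.inv, hx.inv]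

end Main
end CoverReflAux

open CoverReflAux

/-- the cover reflections of `w` generate a parabolic subgroup, and they
are exactly the canonical generators of that parabolic subgroup. -/
theorem coverReflections_generate_parabolic
    (cs : CoxeterSystem M W) [Finite W] (w : W) :
    cs.IsParabolic (Subgroup.closure {t | cs.IsCoverReflection w t}) ∧
      {t | cs.IsCanonicalGenerator (Subgroup.closure {t | cs.IsCoverReflection w t}) t} =
        {t | cs.IsCoverReflection w t} := by
  classical
  set J : Set B := {i | cs.IsRightDescent w i} with hJ
  have hDchar : ∀ t, cs.IsCoverReflection w t ↔ ∃ i ∈ J, t = w * cs.simple i * w⁻¹ := by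
    intro t
    constructor
    · rintro ⟨htr, i, hdesc, heq⟩
      refine ⟨i, hdesc, ?_⟩
      rw [← heq]
      group
    · rintro ⟨i, hi, rfl⟩
      exact ⟨⟨w, i, rfl⟩, i, hi, by group⟩
  have hDset : {t | cs.IsCoverReflection w t}
      = ⇑(MulAut.conj w).toMonoidHom '' (cs.simple '' J) := by
    ext t
    rw [Set.mem_setOf_eq, hDchar]
    constructor
    · rintro ⟨i, hi, rfl⟩
      exact ⟨cs.simple i, ⟨i, hi, rfl⟩, by rw [MulEquiv.coe_toMonoidHom, MulAut.conj_apply]⟩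
    · rintro ⟨x, ⟨i, hi, rfl⟩, rfl⟩
      exact ⟨i, hi, by rw [MulEquiv.coe_toMonoidHom, MulAut.conj_apply]⟩
  have hW' : Subgroup.closure {t | cs.IsCoverReflection w t}
      = (cs.StandardParabolic J).map (MulAut.conj w).toMonoidHom := by
    rw [hDset, CoxeterSystem.StandardParabolic, MonoidHom.map_closure]
  refine ⟨⟨w, J, hW'⟩, ?_⟩
  have hmemW' : ∀ x, x ∈ Subgroup.closure {t | cs.IsCoverReflection w t} ↔
      ∃ v ∈ Subgroup.closure (cs.simple '' J), w * v * w⁻¹ = x := by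
    intro x
    rw [hW', Subgroup.mem_map]
    constructor
    · rintro ⟨v, hv, rfl⟩
      exact ⟨v, hv, by rw [MulEquiv.coe_toMonoidHom, MulAut.conj_apply]⟩
    · rintro ⟨v, hv, hvx⟩
      exact ⟨v, hv, by rw [MulEquiv.coe_toMonoidHom, MulAut.conj_apply]; exact hvx⟩
  have hdesc : ∀ j ∈ J, cs.length (w * cs.simple j) < cs.length w := fun j hj => hj
  have hCstar : ∀ z, z ∈ Subgroup.closure (cs.simple '' J) → cs.IsReflection z →
      eta cs w z = 1 :=
    fun z hz hzr => eta_eq_one_of_descents cs J hdesc hz hzr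
  have hconj : ∀ z z', z ∈ Subgroup.closure (cs.simple '' J) → cs.IsReflection z →
      z' ∈ Subgroup.closure (cs.simple '' J) → cs.IsReflection z' →
      eta cs (w * z * w⁻¹) (w * z' * w⁻¹) = eta cs z z' := by
    intro z z' hz hzr hz' hz'r
    rw [eta_conj, hCstar z' hz' hz'r,
      hCstar (z * z' * z⁻¹) (mul_mem (mul_mem hz hz') (inv_mem hz)) (hz'r.conj z)]
    exact zmod2_two _
  have hinv : ∀ t x : W, cs.IsReflection t → cs.IsReflection x →
      (x ∈ cs.Inversions t ↔ eta cs t x = 1) := by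
    intro t x ht hx
    rw [eta_eq_one_iff cs hx t]
    constructor
    · rintro ⟨-, hlt⟩
      rwa [length_mul_comm_of_reflections cs ht hx] at hlt
    · intro hlt
      exact ⟨hx, by rwa [← length_mul_comm_of_reflections cs ht hx] at hlt⟩
  ext t
  simp only [Set.mem_setOf_eq]
  constructor
  · rintro ⟨htr, htW, hint⟩
    obtain ⟨z, hzJ, hzt⟩ := (hmemW' t).mp htW
    have hz_eq : z = w⁻¹ * t * w := by rw [← hzt]; group
    have hzr : cs.IsReflection z := by
      rw [hz_eq]
      have h := htr.conj w⁻¹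
      rwa [inv_inv] at h
    obtain ⟨ω, hsubJ, hred, hπ⟩ := exists_reduced_word_of_mem cs J hzJ
    have hlenz : cs.length z = ω.length := by rw [← hπ]; exact hred
    have hodd : Odd (cs.length z) := hzr.odd_length
    rcases Nat.lt_or_ge ω.length 2 with hsmall | hbig
    · obtain ⟨c, hc⟩ := hodd
      have h1 : ω.length = 1 := by omega
      obtain ⟨j, rfl⟩ := List.length_eq_one_iff.mp h1
      have hj : j ∈ J := hsubJ j (by simp)
      have hzs : z = cs.simple j := by rw [← hπ, cs.wordProd_singleton]
      exact (hDchar t).mpr ⟨j, hj, by rw [← hzt, hzs]⟩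
    · exfalso
      have hnodup : (cs.rightInvSeq ω).Nodup := hred.nodup_rightInvSeq
      have hlen2 : 2 ≤ (cs.rightInvSeq ω).length := by
        rw [cs.length_rightInvSeq]
        omega
      have key : ∀ (k : ℕ) (hk : k < (cs.rightInvSeq ω).length), (cs.rightInvSeq ω)[k] = z := by
        intro k hk
        set zk := (cs.rightInvSeq ω)[k] with hzk
        have hmem : zk ∈ cs.rightInvSeq ω := List.getElem_mem hk
        have hzkr : cs.IsReflection zk := cs.isReflection_of_mem_rightInvSeq ω hmem
        have hzkJ : zk ∈ Subgroup.closure (cs.simple '' J) := ris_mem cs J hsubJ zk hmem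
        have hzkinv : cs.length (z * zk) < cs.length z := by
          have h := cs.isRightInversion_of_mem_rightInvSeq hred hmem
          rw [hπ] at h
          exact h.2
        have heta1 : eta cs z zk = 1 := (eta_eq_one_iff cs hzkr z).mpr hzkinv
        have hxk : w * zk * w⁻¹ ∈ cs.Inversions t ∩
            (Subgroup.closure {t | cs.IsCoverReflection w t} : Set W) := by
          constructor
          · rw [hinv t _ htr (hzkr.conj w), ← hzt, hconj z zk hzJ hzr hzkJ hzkr]
            exact heta1
          · exact (hmemW' _).mpr ⟨zk, hzkJ, rfl⟩
        rw [hint, Set.mem_singleton_iff, ← hzt] at hxk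
        exact mul_left_cancel (mul_right_cancel hxk)
      have h01 : (cs.rightInvSeq ω)[0] = (cs.rightInvSeq ω)[1] := by
        rw [key 0 (by omega), key 1 (by omega)]
      exact absurd (hnodup.getElem_inj_iff.mp h01) (by norm_num)
  · intro hcov
    obtain ⟨i, hi, ht⟩ := (hDchar t).mp hcov
    subst ht
    have htr : cs.IsReflection (w * cs.simple i * w⁻¹) := ⟨w, i, rfl⟩
    have hsiJ : cs.simple i ∈ Subgroup.closure (cs.simple '' J) :=
      Subgroup.subset_closure ⟨i, hi, rfl⟩
    refine ⟨htr, (hmemW' _).mpr ⟨cs.simple i, hsiJ, rfl⟩, ?_⟩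
    ext x
    constructor
    · rintro ⟨hxI, hxW⟩
      obtain ⟨z', hz'J, hz'x⟩ := (hmemW' x).mp hxW
      have hz'r : cs.IsReflection z' := by
        have heq : z' = w⁻¹ * x * w := by rw [← hz'x]; group
        rw [heq]
        have h := hxI.1.conj w⁻¹
        rwa [inv_inv] at h
      have h1 : eta cs (w * cs.simple i * w⁻¹) x = 1 := (hinv _ x htr hxI.1).mp hxI
      rw [← hz'x, hconj (cs.simple i) z' hsiJ (cs.isReflection_simple i) hz'J hz'r,
        eta_simple] at h1
      have hz's : cs.simple i = z' := by
        by_contra hc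
        rw [if_neg hc] at h1
        exact absurd h1 (by decide)
      rw [Set.mem_singleton_iff, ← hz'x, ← hz's]
    · intro hx
      rw [Set.mem_singleton_iff] at hx
      subst hx
      refine ⟨⟨htr, ?_⟩, (hmemW' _).mpr ⟨cs.simple i, hsiJ, rfl⟩⟩
      rw [htr.mul_self, cs.length_one]
      obtain ⟨c, hc⟩ := htr.odd_length
      omega
end

section
/- Let W_J be a standard parabolic subgroup of a finite Coxeter group W and let W′ be a rank-two parabolic subgroup of W. If the intersection W′ ∩ W_J is nontrivial (contains a non-identity element), then either W′ ∩ W_J = {1, t} where t is a single canonical generator of W′, or W′ ∩ W_J = W′ (i.e., W′ ⊆ W_J). -/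
open CoxeterSystem

variable {B : Type*} [DecidableEq B] {W : Type*} [Group W] {M : CoxeterMatrix B}

namespace SE4

attribute [local instance] Classical.propDecidable

variable {B : Type*} {W : Type*} [Group W] {M : CoxeterMatrix B}

lemma conj_eq_iff (a t x : W) : a * t * a⁻¹ = x ↔ t = a⁻¹ * x * a := by
  constructor
  · intro h; rw [← h]; group
  · intro h; rw [h]; group

lemma eq_inv_mul_iff' (t b c : W) : t = b⁻¹ * c ↔ b = c * t⁻¹ := by
  constructor
  · intro h; rw [h]; group
  · intro h; rw [h]; group

/-- The underlying function of the reflection representation permutation for a generator. -/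
noncomputable def pra (cs : CoxeterSystem M W) (i : B) : W × ZMod 2 → W × ZMod 2 :=
  fun p => (cs.simple i * p.1 * cs.simple i, p.2 + if p.1 = cs.simple i then 1 else 0)

lemma pra_involutive (cs : CoxeterSystem M W) (i : B) : Function.Involutive (pra cs i) := by
  intro p
  simp only [pra]
  have h : (cs.simple i * p.1 * cs.simple i = cs.simple i) ↔ (p.1 = cs.simple i) := by
    constructor
    · intro h
      have := congrArg (fun x => cs.simple i * x * cs.simple i) h
      simpa [mul_assoc] using this
    · intro h; simp [h]
  have h2 : ∀ a : ZMod 2, a + 1 + 1 = a := by decide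
  apply Prod.ext
  · simp [mul_assoc]
  · by_cases hp : p.1 = cs.simple i <;> simp [hp, h, h2]

/-- The permutation of `W × ZMod 2` corresponding to a simple generator. -/
noncomputable def prs (cs : CoxeterSystem M W) (i : B) : Equiv.Perm (W × ZMod 2) :=
  (pra_involutive cs i).toPerm

lemma prs_apply (cs : CoxeterSystem M W) (i : B) (p : W × ZMod 2) :
    prs cs i p = (cs.simple i * p.1 * cs.simple i,
      p.2 + if p.1 = cs.simple i then 1 else 0) := rfl

lemma sum_pair (m : ℕ) (F : ℕ → ZMod 2) :
    ∑ k ∈ Finset.range m, (F (2 * k) + F (2 * k + 1)) = ∑ n ∈ Finset.range (2 * m), F n := by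
  induction m with
  | zero => simp
  | succ m ih =>
    rw [Finset.sum_range_succ, ih]
    have h : 2 * (m + 1) = (2 * m + 1) + 1 := by omega
    rw [h, Finset.sum_range_succ, Finset.sum_range_succ]
    ring

lemma zmod2_sum_even (q : W) (m : ℕ) (hq : q ^ m = 1) (c : W) :
    (∑ n ∈ Finset.range (2 * m), (if q ^ n = c then (1 : ZMod 2) else 0)) = 0 := by
  have h2m : 2 * m = m + m := by ring
  rw [h2m, Finset.sum_range_add]
  have hqq : ∀ n, q ^ (m + n) = q ^ n := by
    intro n; rw [pow_add, hq, one_mul]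
  simp only [hqq]
  have h2 : ∀ a : ZMod 2, a + a = 0 := by decide
  exact h2 _

/-- Increment function. -/
noncomputable def chi (cs : CoxeterSystem M W) (i j : B) (t : W) (k : ℕ) : ZMod 2 :=
  (if (cs.simple i * cs.simple j) ^ k * t * ((cs.simple i * cs.simple j) ^ k)⁻¹ = cs.simple j
    then 1 else 0)
  + (if (cs.simple i * cs.simple j) ^ k * t * ((cs.simple i * cs.simple j) ^ k)⁻¹
      = cs.simple j * cs.simple i * cs.simple j then 1 else 0)

/-- Iteration formula for `(prs i * prs j) ^ l`. -/
lemma prs_mul_pow (cs : CoxeterSystem M W) (i j : B) (l : ℕ) (t : W) (ε : ZMod 2) :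
    ((prs cs i * prs cs j) ^ l) (t, ε) =
      ((cs.simple i * cs.simple j) ^ l * t * ((cs.simple i * cs.simple j) ^ l)⁻¹,
        ε + ∑ k ∈ Finset.range l, chi cs i j t k) := by
  induction l with
  | zero => simp
  | succ l ih =>
    rw [pow_succ', Equiv.Perm.mul_apply, Equiv.Perm.mul_apply, ih]
    simp only [prs_apply]
    set q := cs.simple i * cs.simple j with hqdef
    have hqinv : cs.simple j * cs.simple i = q⁻¹ := by
      rw [hqdef, mul_inv_rev]; simp
    apply Prod.ext
    · show cs.simple i * (cs.simple j * (q ^ l * t * (q ^ l)⁻¹) * cs.simple j) * cs.simple i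
        = q ^ (l + 1) * t * (q ^ (l + 1))⁻¹
      calc cs.simple i * (cs.simple j * (q ^ l * t * (q ^ l)⁻¹) * cs.simple j) * cs.simple i
          = q * (q ^ l * t * (q ^ l)⁻¹) * (cs.simple j * cs.simple i) := by rw [hqdef]; group
        _ = q * (q ^ l * t * (q ^ l)⁻¹) * q⁻¹ := by rw [hqinv]
        _ = q ^ (l + 1) * t * (q ^ (l + 1))⁻¹ := by rw [pow_succ']; group
    · show (ε + ∑ k ∈ Finset.range l, chi cs i j t k)
          + (if q ^ l * t * (q ^ l)⁻¹ = cs.simple j then 1 else 0)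
          + (if cs.simple j * (q ^ l * t * (q ^ l)⁻¹) * cs.simple j = cs.simple i then 1 else 0)
        = ε + ∑ k ∈ Finset.range (l + 1), chi cs i j t k
      rw [Finset.sum_range_succ]
      have hiff : (cs.simple j * (q ^ l * t * (q ^ l)⁻¹) * cs.simple j = cs.simple i)
          ↔ (q ^ l * t * (q ^ l)⁻¹ = cs.simple j * cs.simple i * cs.simple j) := by
        constructor
        · intro h
          have := congrArg (fun x => cs.simple j * x * cs.simple j) h
          simpa [mul_assoc] using this
        · intro h; rw [h]; simp [mul_assoc]
      rw [if_congr hiff rfl rfl]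
      have hchi : chi cs i j t l
          = (if q ^ l * t * (q ^ l)⁻¹ = cs.simple j then (1 : ZMod 2) else 0)
            + (if q ^ l * t * (q ^ l)⁻¹ = cs.simple j * cs.simple i * cs.simple j
                then (1 : ZMod 2) else 0) := by
        rw [chi, ← hqdef]
      rw [hchi]
      ring

theorem prs_liftable (cs : CoxeterSystem M W) : M.IsLiftable (fun i => prs cs i) := by
  intro i j
  apply Equiv.ext
  rintro ⟨t, ε⟩
  simp only []
  rw [prs_mul_pow]
  set q := cs.simple i * cs.simple j with hqdef
  have hq : q ^ M i j = 1 := cs.simple_mul_simple_pow i j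
  have hsq1 : cs.simple j * q = q⁻¹ * cs.simple j := by
    rw [hqdef]
    simp [mul_inv_rev, mul_assoc]
  have hsqk : ∀ k : ℕ, cs.simple j * q ^ k = (q ^ k)⁻¹ * cs.simple j := by
    intro k
    induction k with
    | zero => simp
    | succ k ihk =>
      rw [pow_succ, ← mul_assoc, ihk, mul_assoc, hsq1]
      group
  have key : ∑ k ∈ Finset.range (M i j), chi cs i j t k = 0 := by
    have step : ∀ k, chi cs i j t k
        = ((if q ^ (2 * k) = cs.simple j * t⁻¹ then (1 : ZMod 2) else 0)
          + (if q ^ (2 * k + 1) = cs.simple j * t⁻¹ then (1 : ZMod 2) else 0)) := by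
      intro k
      have e1 : (q ^ k * t * (q ^ k)⁻¹ = cs.simple j) ↔ (q ^ (2 * k) = cs.simple j * t⁻¹) := by
        rw [conj_eq_iff]
        have hc : (q ^ k)⁻¹ * cs.simple j * q ^ k = (q ^ (2 * k))⁻¹ * cs.simple j := by
          rw [← hsqk (2 * k), ← hsqk k, mul_assoc, ← pow_add, two_mul]
        rw [hc, eq_inv_mul_iff']
      have e2 : (q ^ k * t * (q ^ k)⁻¹ = cs.simple j * cs.simple i * cs.simple j)
          ↔ (q ^ (2 * k + 1) = cs.simple j * t⁻¹) := by
        have hj2 : cs.simple j * cs.simple i * cs.simple j = q⁻¹ * cs.simple j := by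
          rw [hqdef, mul_inv_rev]
          simp [mul_assoc]
        rw [hj2, conj_eq_iff]
        have hc : (q ^ k)⁻¹ * (q⁻¹ * cs.simple j) * q ^ k = (q ^ (2 * k + 1))⁻¹ * cs.simple j := by
          have h1 : (q ^ k)⁻¹ * (q⁻¹ * cs.simple j) = (q ^ (k + 1))⁻¹ * cs.simple j := by
            rw [pow_succ]; group
          rw [h1, ← hsqk (k + 1), ← hsqk (2 * k + 1), mul_assoc, ← pow_add]
          have h2 : k + 1 + k = 2 * k + 1 := by omega
          rw [h2]
        rw [hc, eq_inv_mul_iff']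
      rw [chi, ← hqdef]
      rw [if_congr e1 rfl rfl, if_congr e2 rfl rfl]
    calc ∑ k ∈ Finset.range (M i j), chi cs i j t k
        = ∑ k ∈ Finset.range (M i j),
            ((fun n => if q ^ n = cs.simple j * t⁻¹ then (1 : ZMod 2) else 0) (2 * k)
              + (fun n => if q ^ n = cs.simple j * t⁻¹ then (1 : ZMod 2) else 0) (2 * k + 1)) :=
          Finset.sum_congr rfl (fun k _ => step k)
      _ = ∑ n ∈ Finset.range (2 * M i j),
            (fun n => if q ^ n = cs.simple j * t⁻¹ then (1 : ZMod 2) else 0) n :=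
          sum_pair (M i j) (fun n => if q ^ n = cs.simple j * t⁻¹ then (1 : ZMod 2) else 0)
      _ = 0 := zmod2_sum_even q (M i j) hq _
  rw [key, hq]
  simp

variable (cs : CoxeterSystem M W)

/-- The reflection representation as a homomorphism. -/
noncomputable def phi : W →* Equiv.Perm (W × ZMod 2) :=
  cs.lift ⟨fun i => prs cs i, prs_liftable cs⟩

lemma phi_simple (i : B) : phi cs (cs.simple i) = prs cs i :=
  cs.lift_apply_simple (prs_liftable cs) i

lemma phi_fst (w : W) : ∀ (t : W) (ε : ZMod 2), (phi cs w (t, ε)).1 = w * t * w⁻¹ := by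
  induction w using cs.simple_induction_left with
  | one => intro t ε; simp
  | mul_simple_left w i ih =>
    intro t ε
    rw [map_mul, Equiv.Perm.mul_apply, phi_simple]
    rw [prs_apply]
    show cs.simple i * (phi cs w (t, ε)).1 * cs.simple i = _
    rw [ih t ε, mul_inv_rev]
    simp [mul_assoc]

lemma phi_snd (w : W) : ∀ (t : W) (ε : ZMod 2), (phi cs w (t, ε)).2 = ε + (phi cs w (t, 0)).2 := by
  induction w using cs.simple_induction_left with
  | one => intro t ε; simp
  | mul_simple_left w i ih =>
    intro t ε
    rw [map_mul, Equiv.Perm.mul_apply, Equiv.Perm.mul_apply, phi_simple, prs_apply, prs_apply]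
    show (phi cs w (t, ε)).2 + _ = ε + ((phi cs w (t, 0)).2 + _)
    rw [ih t ε, phi_fst, phi_fst]
    ring

/-- The inversion cocycle. -/
noncomputable def eta (w t : W) : ZMod 2 := (phi cs w⁻¹ (t, 0)).2

lemma eta_one (t : W) : eta cs 1 t = 0 := by
  simp [eta, phi]

lemma eta_mul (w₁ w₂ t : W) :
    eta cs (w₁ * w₂) t = eta cs w₁ t + eta cs w₂ (w₁⁻¹ * t * w₁) := by
  unfold eta
  rw [mul_inv_rev, map_mul, Equiv.Perm.mul_apply]
  have h1 : phi cs w₁⁻¹ (t, 0) = (w₁⁻¹ * t * w₁, (phi cs w₁⁻¹ (t, 0)).2) := by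
    apply Prod.ext
    · rw [phi_fst]; group
    · rfl
  rw [h1, phi_snd]

lemma eta_simple (i : B) (t : W) :
    eta cs (cs.simple i) t = if t = cs.simple i then 1 else 0 := by
  unfold eta
  rw [cs.inv_simple, phi_simple, prs_apply]
  show 0 + _ = _
  rw [zero_add]

lemma eta_count (ω : List B) (t : W) :
    eta cs (cs.wordProd ω) t = (List.count t (cs.leftInvSeq ω) : ZMod 2) := by
  induction ω generalizing t with
  | nil => simp [eta_one]
  | cons i ω ih =>
    rw [cs.wordProd_cons, eta_mul, eta_simple, cs.inv_simple]
    have hlis : cs.leftInvSeq (i :: ω)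
        = cs.simple i :: List.map (⇑(MulAut.conj (cs.simple i))) (cs.leftInvSeq ω) := rfl
    rw [hlis, List.count_cons]
    have hinj : Function.Injective (⇑(MulAut.conj (cs.simple i))) :=
      (MulAut.conj (cs.simple i)).injective
    have hcnt : List.count t (List.map (⇑(MulAut.conj (cs.simple i))) (cs.leftInvSeq ω))
        = List.count (cs.simple i * t * cs.simple i) (cs.leftInvSeq ω) := by
      have : t = MulAut.conj (cs.simple i) (cs.simple i * t * cs.simple i) := by
        rw [MulAut.conj_apply]
        simp [mul_assoc]
      rw [this, List.count_map_of_injective _ _ hinj]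
      rw [← this]
    rw [hcnt, ih]
    by_cases h : t = cs.simple i
    · rw [if_pos h, if_pos (by simp [h])]
      push_cast
      ring
    · rw [if_neg h, if_neg (by simp; exact fun hh => h hh.symm)]
      push_cast
      ring

lemma eta_eq_zero_of_gt : ∀ (n : ℕ) (w t : W), cs.IsReflection t → cs.length w = n →
    cs.length w < cs.length (t * w) → eta cs w t = 0 := by
  intro n
  induction n using Nat.strong_induction_on with
  | _ n ih =>
    intro w t ht hn hlt
    rcases eq_or_ne w 1 with rfl | hw
    · exact eta_one cs t
    · obtain ⟨i, hi⟩ := cs.exists_leftDescent_of_ne_one hw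
      have hine : t ≠ cs.simple i := by
        rintro rfl
        exact absurd hi (by simp only [CoxeterSystem.IsLeftDescent]; omega)
      set w' := cs.simple i * w with hw'
      have hww : w = cs.simple i * w' := by rw [hw']; simp
      have hlw' : cs.length w' + 1 = cs.length w := by
        rcases cs.length_simple_mul w i with h | h
        · exact absurd hi (by simp only [CoxeterSystem.IsLeftDescent]; omega)
        · exact h
      have heta : eta cs w t = eta cs w' (cs.simple i * t * cs.simple i) := by
        rw [hww, eta_mul, eta_simple, if_neg hine, cs.inv_simple, zero_add]
      set t' := cs.simple i * t * cs.simple i with ht'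
      have ht'refl : cs.IsReflection t' := by
        have := ht.conj (cs.simple i)
        rwa [cs.inv_simple] at this
      have htw : t * w = cs.simple i * (t' * w') := by
        rw [ht', hw']
        simp [mul_assoc]
      have hgt : cs.length w' < cs.length (t' * w') := by
        by_contra hle
        push_neg at hle
        have hne := ht'refl.length_mul_right_ne w'
        have hlt2 : cs.length (t' * w') < cs.length w' := lt_of_le_of_ne hle hne
        have : cs.length (t * w) ≤ cs.length (t' * w') + 1 := by
          rw [htw]
          rcases cs.length_simple_mul (t' * w') i with h | h <;> omega
        omega
      have := ih (cs.length w') (by omega) w' t' ht'refl rfl hgt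
      rw [heta, this]

lemma eta_inv_conj (w r : W) : eta cs w⁻¹ r = eta cs w (w * r * w⁻¹) := by
  have h := eta_mul cs w w⁻¹ (w * r * w⁻¹)
  rw [mul_inv_cancel, eta_one] at h
  have hr : w⁻¹ * (w * r * w⁻¹) * w = r := by group
  rw [hr] at h
  have : ∀ a b : ZMod 2, 0 = a + b → b = a := by decide
  exact this _ _ h

lemma eta_refl_self {t : W} (ht : cs.IsReflection t) : eta cs t t = 1 := by
  obtain ⟨w, i, rfl⟩ := ht
  have key : eta cs (w * cs.simple i * w⁻¹) (w * cs.simple i * w⁻¹)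
      = eta cs w (w * cs.simple i * w⁻¹) + eta cs (cs.simple i * w⁻¹) (cs.simple i) := by
    rw [show w * cs.simple i * w⁻¹ = w * (cs.simple i * w⁻¹) by group, eta_mul]
    congr 2
    group
  rw [key, eta_mul, eta_simple, if_pos rfl, cs.inv_simple]
  have h2 : cs.simple i * cs.simple i * (cs.simple i) = cs.simple i := by simp
  rw [h2, eta_inv_conj]
  have : ∀ a : ZMod 2, a + (1 + a) = 1 := by decide
  exact this _

theorem eta_eq_one_iff {t : W} (ht : cs.IsReflection t) (w : W) :
    eta cs w t = 1 ↔ cs.length (t * w) < cs.length w := by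
  constructor
  · intro h
    by_contra hle
    push_neg at hle
    have hne := ht.length_mul_right_ne w
    have hgt : cs.length w < cs.length (t * w) := lt_of_le_of_ne hle (Ne.symm hne)
    rw [eta_eq_zero_of_gt cs (cs.length w) w t ht rfl hgt] at h
    exact absurd h (by decide)
  · intro h
    set v := t * w with hv
    have hw : w = t * v := by rw [hv, ← mul_assoc, ht.mul_self, one_mul]
    have hgt : cs.length v < cs.length (t * v) := by rw [← hw]; exact h
    have h0 : eta cs v t = 0 := eta_eq_zero_of_gt cs (cs.length v) v t ht rfl hgt
    rw [hw, eta_mul, eta_refl_self cs ht]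
    rw [show t⁻¹ * t * t = t by rw [ht.inv]; simp [ht.mul_self]]
    rw [h0, add_zero]

/-- Strong exchange property. -/
theorem strong_exchange (ω : List B) {t : W} (ht : cs.IsReflection t)
    (hlt : cs.length (t * cs.wordProd ω) < cs.length (cs.wordProd ω)) :
    t ∈ cs.leftInvSeq ω := by
  have h1 : eta cs (cs.wordProd ω) t = 1 := (eta_eq_one_iff cs ht _).mpr hlt
  rw [eta_count] at h1
  by_contra hmem
  rw [List.count_eq_zero_of_not_mem hmem] at h1
  exact absurd h1 (by decide)

section Parabolic

variable {J : Set B} [DecidableEq B]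

lemma mem_SP_iff (J : Set B) (w : W) :
    w ∈ cs.StandardParabolic J ↔ ∃ ω : List B, (∀ i ∈ ω, i ∈ J) ∧ cs.wordProd ω = w := by
  constructor
  · intro hw
    induction hw using Subgroup.closure_induction with
    | mem x hx =>
      obtain ⟨i, hi, rfl⟩ := hx
      exact ⟨[i], by simpa using hi, by simp⟩
    | one => exact ⟨[], by simp, by simp⟩
    | mul x y hx hy ihx ihy =>
      obtain ⟨ω₁, h1, rfl⟩ := ihx
      obtain ⟨ω₂, h2, rfl⟩ := ihy
      refine ⟨ω₁ ++ ω₂, ?_, cs.wordProd_append ω₁ ω₂⟩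
      intro i hi
      rcases List.mem_append.mp hi with h | h
      exacts [h1 i h, h2 i h]
    | inv x hx ihx =>
      obtain ⟨ω, h1, rfl⟩ := ihx
      exact ⟨ω.reverse, fun i hi => h1 i (List.mem_reverse.mp hi), cs.wordProd_reverse ω⟩
  · rintro ⟨ω, hω, rfl⟩
    induction ω with
    | nil => simpa using one_mem _
    | cons i ω ih =>
      rw [cs.wordProd_cons]
      exact mul_mem (Subgroup.subset_closure ⟨i, hω i (by simp), rfl⟩)
        (ih (fun j hj => hω j (by simp [hj])))

lemma reduce_word : ∀ (n : ℕ) (ω : List B), ω.length = n →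
    ∃ ρ : List B, cs.IsReduced ρ ∧ (∀ i ∈ ρ, i ∈ ω) ∧ cs.wordProd ρ = cs.wordProd ω := by
  intro n
  induction n using Nat.strong_induction_on with
  | _ n ih =>
    intro ω hlen
    by_cases hred : cs.IsReduced ω
    · exact ⟨ω, hred, fun i h => h, rfl⟩
    rcases List.eq_nil_or_concat ω with rfl | ⟨ω', i, rfl⟩
    · exact absurd (by simp [CoxeterSystem.IsReduced]) hred
    rw [List.concat_eq_append] at *
    have hlen' : ω'.length + 1 = n := by simpa using hlen
    have hπ : cs.wordProd (ω' ++ [i]) = cs.wordProd ω' * cs.simple i := by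
      rw [cs.wordProd_append, cs.wordProd_singleton]
    by_cases hred' : cs.IsReduced ω'
    · -- last letter is a descent; use strong exchange to shorten by two
      have hne : cs.length (cs.wordProd ω' * cs.simple i) ≠ ω'.length + 1 := by
        intro h
        exact hred (by rw [CoxeterSystem.IsReduced, hπ, h]; simp)
      have hdesc : cs.length (cs.wordProd ω' * cs.simple i) + 1 = cs.length (cs.wordProd ω') := by
        rcases cs.length_mul_simple (cs.wordProd ω') i with h | h
        · rw [hred'] at h; exact absurd h hne
        · rw [← h]
      set t := cs.wordProd ω' * cs.simple i * (cs.wordProd ω')⁻¹ with htdef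
      have ht : cs.IsReflection t := ⟨cs.wordProd ω', i, rfl⟩
      have htmul : t * cs.wordProd ω' = cs.wordProd ω' * cs.simple i := by
        rw [htdef]; group
      have hlt : cs.length (t * cs.wordProd ω') < cs.length (cs.wordProd ω') := by
        rw [htmul]; omega
      have hmem : t ∈ cs.leftInvSeq ω' := strong_exchange cs ω' ht hlt
      obtain ⟨j, hj, hget⟩ := List.mem_iff_getElem.mp hmem
      have hj' : j < ω'.length := by simpa using hj
      have hgetD : (cs.leftInvSeq ω').getD j 1 = t := by
        rw [List.getD_eq_getElem _ 1 hj, hget]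
      have herase : cs.wordProd (ω' ++ [i]) = cs.wordProd (ω'.eraseIdx j) := by
        rw [hπ, ← htmul, ← hgetD]
        exact cs.getD_leftInvSeq_mul_wordProd ω' j
      have hlene : (ω'.eraseIdx j).length < n := by
        rw [List.length_eraseIdx, if_pos hj']
        omega
      obtain ⟨ρ, hρred, hρmem, hρπ⟩ := ih _ hlene (ω'.eraseIdx j) rfl
      refine ⟨ρ, hρred, ?_, by rw [hρπ, ← herase]⟩
      intro a ha
      exact List.mem_append_left _ ((List.eraseIdx_sublist ω' j).mem (hρmem a ha))
    · -- shorten the prefix first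
      obtain ⟨ρ', hρ'red, hρ'mem, hρ'π⟩ := ih ω'.length (by omega) ω' rfl
      have hshort : (ρ' ++ [i]).length < n := by
        have h1 : ρ'.length = cs.length (cs.wordProd ω') := by rw [← hρ'π, hρ'red]
        have h2 : cs.length (cs.wordProd ω') < ω'.length :=
          lt_of_le_of_ne (hρ'π ▸ (hρ'π ▸ cs.length_wordProd_le ω')) hred'
      -- length_wordProd_le : ℓ (π ω') ≤ ω'.length ; ≠ since not reduced
        simp only [List.length_append, List.length_singleton]
        omega
      obtain ⟨ρ, hρred, hρmem, hρπ⟩ := ih _ hshort (ρ' ++ [i]) rfl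
      refine ⟨ρ, hρred, ?_, ?_⟩
      · intro a ha
        rcases List.mem_append.mp (hρmem a ha) with h | h
        · exact List.mem_append_left _ (hρ'mem a h)
        · exact List.mem_append_right _ h
      · rw [hρπ, cs.wordProd_append, cs.wordProd_append, hρ'π]

lemma exists_reduced_word_SP {w : W} (hw : w ∈ cs.StandardParabolic J) :
    ∃ ω : List B, cs.IsReduced ω ∧ (∀ i ∈ ω, i ∈ J) ∧ cs.wordProd ω = w := by
  obtain ⟨ω, hω, rfl⟩ := (mem_SP_iff cs J w).mp hw
  obtain ⟨ρ, h1, h2, h3⟩ := reduce_word cs ω.length ω rfl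
  exact ⟨ρ, h1, fun i hi => hω i (h2 i hi), h3⟩

lemma lis_mem_SP : ∀ (ω : List B), (∀ i ∈ ω, i ∈ J) →
    ∀ t ∈ cs.leftInvSeq ω, t ∈ cs.StandardParabolic J := by
  intro ω
  induction ω with
  | nil => intro _ t ht; simp [CoxeterSystem.leftInvSeq] at ht
  | cons i ω ih =>
    intro hmem t ht
    have hsi : cs.simple i ∈ cs.StandardParabolic J :=
      Subgroup.subset_closure ⟨i, hmem i (by simp), rfl⟩
    rcases List.mem_cons.mp ht with rfl | ht'
    · exact hsi
    · obtain ⟨x, hx, rfl⟩ := List.mem_map.mp ht'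
      have hxSP := ih (fun j hj => hmem j (by simp [hj])) x hx
      rw [MulAut.conj_apply]
      exact mul_mem (mul_mem hsi hxSP) (inv_mem hsi)

lemma inversion_mem_SP {w t : W} (hw : w ∈ cs.StandardParabolic J)
    (ht : cs.IsReflection t) (hlt : cs.length (t * w) < cs.length w) :
    t ∈ cs.StandardParabolic J := by
  obtain ⟨ω, hred, hmem, rfl⟩ := exists_reduced_word_SP cs hw
  exact lis_mem_SP cs ω hmem t (strong_exchange cs ω ht hlt)

lemma simple_of_length_one_SP {d : W} (hd : d ∈ cs.StandardParabolic J)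
    (hlen : cs.length d = 1) : ∃ j ∈ J, d = cs.simple j := by
  obtain ⟨ω, hred, hmem, hπ⟩ := exists_reduced_word_SP cs hd
  have hω1 : ω.length = 1 := by rw [← hred, hπ, hlen]
  rcases ω with _ | ⟨j, ω'⟩
  · simp at hω1
  · rcases ω' with _ | ⟨j', ω''⟩
    · exact ⟨j, hmem j (by simp), by rw [← hπ, cs.wordProd_singleton]⟩
    · simp at hω1

end Parabolic

section MinCoset

variable [DecidableEq B] (J' : Set B)

lemma exists_min_coset (u : W) :
    ∃ u₀ : W, (∃ d ∈ cs.StandardParabolic J', u * d = u₀) ∧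
      ∀ v : W, (∃ d ∈ cs.StandardParabolic J', u * d = v) → cs.length u₀ ≤ cs.length v := by
  set S : Set ℕ := {n | ∃ v : W, (∃ d ∈ cs.StandardParabolic J', u * d = v) ∧ cs.length v = n}
    with hS
  have hne : S.Nonempty := ⟨cs.length u, u, ⟨1, one_mem _, mul_one u⟩, rfl⟩
  obtain ⟨v₀, hv₀, hlen₀⟩ := Nat.sInf_mem hne
  refine ⟨v₀, hv₀, fun v hv => ?_⟩
  rw [hlen₀]
  exact Nat.sInf_le ⟨v, hv, rfl⟩

lemma min_coset_mul {u₀ : W}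
    (hmin : ∀ v : W, (∃ d ∈ cs.StandardParabolic J', u₀ * d = v) → cs.length u₀ ≤ cs.length v) :
    ∀ d ∈ cs.StandardParabolic J', cs.length (u₀ * d) = cs.length u₀ + cs.length d := by
  suffices h : ∀ (n : ℕ) (d : W), d ∈ cs.StandardParabolic J' → cs.length d = n →
      cs.length (u₀ * d) = cs.length u₀ + cs.length d by
    intro d hd
    exact h (cs.length d) d hd rfl
  intro n
  induction n using Nat.strong_induction_on with
  | _ n ih =>
    intro d hd hn
    obtain ⟨ω, hred, hmem, hπ⟩ := exists_reduced_word_SP cs hd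
    rcases List.eq_nil_or_concat ω with rfl | ⟨ω', i, rfl⟩
    · simp only [← hπ, cs.wordProd_nil]
      simp
    rw [List.concat_eq_append] at *
    have hi : i ∈ J' := hmem i (by simp)
    have hsi : cs.simple i ∈ cs.StandardParabolic J' := Subgroup.subset_closure ⟨i, hi, rfl⟩
    have hred' : cs.IsReduced ω' := by
      have := hred.take ω'.length
      rwa [List.take_left] at this
    set d' := cs.wordProd ω' with hd'def
    have hd' : d' ∈ cs.StandardParabolic J' :=
      (mem_SP_iff cs J' d').mpr ⟨ω', fun j hj => hmem j (by simp [hj]), rfl⟩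
    have hld' : cs.length d' = ω'.length := hred'
    have hld : cs.length d = ω'.length + 1 := by
      rw [← hπ, hred]
      simp
    have hdd : d = d' * cs.simple i := by
      rw [← hπ, cs.wordProd_append, cs.wordProd_singleton]
    have ihd' : cs.length (u₀ * d') = cs.length u₀ + cs.length d' :=
      ih ω'.length (by omega) d' hd' hld'
    rcases cs.length_mul_simple (u₀ * d') i with h | h
    · have hlast : cs.length (d' * cs.simple i) = ω'.length + 1 := by rw [← hdd]; exact hld
      rw [hdd, ← mul_assoc, h, ihd', hld', hlast]
      omega
    · -- contradiction with minimality via strong exchange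
      exfalso
      obtain ⟨ωᵤ, hluω, huω⟩ := cs.exists_reduced_word u₀
      replace hluω : ωᵤ.length = cs.length u₀ := by rw [huω]; exact Eq.symm hluω
      set κ := ωᵤ ++ ω' with hκdef
      have hπκ : cs.wordProd κ = u₀ * d' := by
        rw [hκdef, cs.wordProd_append, ← huω, hd'def]
      have hredκ : cs.IsReduced κ := by
        rw [CoxeterSystem.IsReduced, hπκ, ihd']
        simp [hκdef, hluω, hld']
      set t := (u₀ * d') * cs.simple i * (u₀ * d')⁻¹ with htdef
      have ht : cs.IsReflection t := ⟨u₀ * d', i, rfl⟩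
      have htmul : t * (u₀ * d') = u₀ * d' * cs.simple i := by rw [htdef]; group
      have hlt : cs.length (t * cs.wordProd κ) < cs.length (cs.wordProd κ) := by
        rw [hπκ, htmul]
        omega
      have hmemt : t ∈ cs.leftInvSeq κ := strong_exchange cs κ ht hlt
      obtain ⟨j, hj, hget⟩ := List.mem_iff_getElem.mp hmemt
      have hjκ : j < κ.length := by simpa using hj
      have hgetD : (cs.leftInvSeq κ).getD j 1 = t := by
        rw [List.getD_eq_getElem _ 1 hj, hget]
      have herase : u₀ * d' * cs.simple i = cs.wordProd (κ.eraseIdx j) := by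
        rw [← htmul, ← hπκ, ← hgetD]
        exact cs.getD_leftInvSeq_mul_wordProd κ j
      by_cases hjcase : j < ωᵤ.length
      · have he : κ.eraseIdx j = ωᵤ.eraseIdx j ++ ω' := by
          rw [hκdef]
          exact List.eraseIdx_append_of_lt_length hjcase ω'
        have hv : cs.wordProd (ωᵤ.eraseIdx j) = u₀ * (d' * cs.simple i * d'⁻¹) := by
          have h1 : u₀ * d' * cs.simple i = cs.wordProd (ωᵤ.eraseIdx j) * d' := by
            rw [herase, he, cs.wordProd_append, hd'def]
          have h2 : cs.wordProd (ωᵤ.eraseIdx j) = u₀ * d' * cs.simple i * d'⁻¹ := by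
            rw [h1]; group
          rw [h2]; group
        have hvcoset : ∃ e ∈ cs.StandardParabolic J', u₀ * e = cs.wordProd (ωᵤ.eraseIdx j) :=
          ⟨d' * cs.simple i * d'⁻¹, mul_mem (mul_mem hd' hsi) (inv_mem hd'), hv.symm⟩
        have hlenv : cs.length (cs.wordProd (ωᵤ.eraseIdx j)) < cs.length u₀ := by
          calc cs.length (cs.wordProd (ωᵤ.eraseIdx j)) ≤ (ωᵤ.eraseIdx j).length :=
              cs.length_wordProd_le _
            _ < ωᵤ.length := by rw [List.length_eraseIdx, if_pos hjcase]; omega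
            _ = cs.length u₀ := hluω
        exact absurd (hmin _ hvcoset) (by omega)
      · push_neg at hjcase
        have he : κ.eraseIdx j = ωᵤ ++ ω'.eraseIdx (j - ωᵤ.length) := by
          rw [hκdef]
          exact List.eraseIdx_append_of_length_le hjcase ω'
        have hj' : j - ωᵤ.length < ω'.length := by
          have : κ.length = ωᵤ.length + ω'.length := by simp [hκdef]
          omega
        have hcancel : d' * cs.simple i = cs.wordProd (ω'.eraseIdx (j - ωᵤ.length)) := by
          have h1 : u₀ * (d' * cs.simple i) = u₀ * cs.wordProd (ω'.eraseIdx (j - ωᵤ.length)) := by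
            rw [← mul_assoc, herase, he, cs.wordProd_append, ← huω]
          exact mul_left_cancel h1
        have : cs.length d ≤ ω'.length - 1 := by
          rw [hdd, hcancel]
          calc cs.length (cs.wordProd (ω'.eraseIdx (j - ωᵤ.length)))
              ≤ (ω'.eraseIdx (j - ωᵤ.length)).length := cs.length_wordProd_le _
            _ = ω'.length - 1 := by rw [List.length_eraseIdx, if_pos hj']
        omega

end MinCoset

section ConjFormula

variable [DecidableEq B] {J' : Set B} {u₀ : W}

/-- The inversion-set conjugation formula for a minimal coset representative. -/
lemma eta_conj
    (hmin : ∀ v : W, (∃ d ∈ cs.StandardParabolic J', u₀ * d = v) → cs.length u₀ ≤ cs.length v)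
    {e d : W} (he : e ∈ cs.StandardParabolic J') (hd : d ∈ cs.StandardParabolic J')
    (hdrefl : cs.IsReflection d) :
    eta cs (u₀ * e * u₀⁻¹) (u₀ * d * u₀⁻¹) = eta cs e d := by
  have hadd := min_coset_mul cs J' hmin
  have hdne : d ≠ 1 := by
    intro h
    have := hdrefl.odd_length
    rw [h] at this
    simp at this
  have hdlen : 1 ≤ cs.length d := by
    by_contra h
    push_neg at h
    interval_cases hh : cs.length d
    exact hdne (cs.length_eq_zero_iff.mp hh)
  set t := u₀ * d * u₀⁻¹ with htdef
  have htrefl : cs.IsReflection t := hdrefl.conj u₀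
  have h1 : eta cs (u₀ * (e * u₀⁻¹)) t = eta cs u₀ t + eta cs (e * u₀⁻¹) (u₀⁻¹ * t * u₀) :=
    eta_mul cs u₀ (e * u₀⁻¹) t
  have h2 : u₀⁻¹ * t * u₀ = d := by rw [htdef]; group
  have h3 : eta cs (e * u₀⁻¹) d = eta cs e d + eta cs u₀⁻¹ (e⁻¹ * d * e) :=
    eta_mul cs e u₀⁻¹ d
  -- eta cs u₀ t = 0
  have h4 : eta cs u₀ t = 0 := by
    have hne1 : ¬ cs.length (t * u₀) < cs.length u₀ := by
      have : t * u₀ = u₀ * d := by rw [htdef]; group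
      rw [this, hadd d hd]
      omega
    have := eta_eq_one_iff cs htrefl u₀
    rcases (by decide : ∀ a : ZMod 2, a = 0 ∨ a = 1) (eta cs u₀ t) with h | h
    · exact h
    · exact absurd (this.mp h) hne1
  -- eta cs u₀⁻¹ (e⁻¹ d e) = 0
  have h5 : eta cs u₀⁻¹ (e⁻¹ * d * e) = 0 := by
    have hr : cs.IsReflection (e⁻¹ * d * e) := by
      have := hdrefl.conj e⁻¹
      rwa [inv_inv] at this
    have hrm : e⁻¹ * d * e ∈ cs.StandardParabolic J' :=
      mul_mem (mul_mem (inv_mem he) hd) he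
    have hrne : e⁻¹ * d * e ≠ 1 := by
      intro h
      apply hdne
      have := congrArg (fun x => e * x * e⁻¹) h
      simpa [mul_assoc] using this
    have hrlen : 1 ≤ cs.length (e⁻¹ * d * e) := by
      by_contra h
      push_neg at h
      interval_cases hh : cs.length (e⁻¹ * d * e)
      exact hrne (cs.length_eq_zero_iff.mp hh)
    have hne1 : ¬ cs.length ((e⁻¹ * d * e) * u₀⁻¹) < cs.length u₀⁻¹ := by
      have hinv : cs.length ((e⁻¹ * d * e) * u₀⁻¹) = cs.length (u₀ * (e⁻¹ * d * e)) := by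
        rw [← cs.length_inv (u₀ * (e⁻¹ * d * e))]
        congr 1
        rw [mul_inv_rev, hr.inv]
      rw [hinv, hadd _ hrm, cs.length_inv]
      omega
    have := eta_eq_one_iff cs hr u₀⁻¹
    rcases (by decide : ∀ a : ZMod 2, a = 0 ∨ a = 1) (eta cs u₀⁻¹ (e⁻¹ * d * e)) with h | h
    · exact h
    · exact absurd (this.mp h) hne1
  have : eta cs (u₀ * e * u₀⁻¹) t = eta cs (u₀ * (e * u₀⁻¹)) t := by rw [mul_assoc]
  rw [this, h1, h2, h3, h4, h5]
  ring

/-- Conjugated inversion criterion. -/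
lemma inversions_conj
    (hmin : ∀ v : W, (∃ d ∈ cs.StandardParabolic J', u₀ * d = v) → cs.length u₀ ≤ cs.length v)
    {e d : W} (he : e ∈ cs.StandardParabolic J') (hd : d ∈ cs.StandardParabolic J')
    (hdrefl : cs.IsReflection d) :
    (u₀ * d * u₀⁻¹ ∈ cs.Inversions (u₀ * e * u₀⁻¹)) ↔ d ∈ cs.Inversions e := by
  have htrefl : cs.IsReflection (u₀ * d * u₀⁻¹) := hdrefl.conj u₀
  have hkey := eta_conj cs hmin he hd hdrefl
  constructor
  · rintro ⟨-, hlt⟩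
    refine ⟨hdrefl, ?_⟩
    have h1 : eta cs (u₀ * e * u₀⁻¹) (u₀ * d * u₀⁻¹) = 1 :=
      (eta_eq_one_iff cs htrefl _).mpr hlt
    rw [hkey] at h1
    exact (eta_eq_one_iff cs hdrefl e).mp h1
  · rintro ⟨-, hlt⟩
    refine ⟨htrefl, ?_⟩
    have h1 : eta cs e d = 1 := (eta_eq_one_iff cs hdrefl e).mpr hlt
    rw [← hkey] at h1
    exact (eta_eq_one_iff cs htrefl _).mp h1

end ConjFormula

end SE4

/-- if the intersection of a rank-two parabolic subgroup `W'` with a standard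
parabolic subgroup `W_J` is nontrivial, then either it is `{1, t}` for a single canonical
generator `t` of `W'`, or `W' ⊆ W_J`. -/
theorem rank_two_parabolic_inter_standardParabolic
    (cs : CoxeterSystem M W) [Finite W] (J : Set B) (W' : Subgroup W)
    (h : ∃ (u : W) (J' : Set B), J'.ncard = 2 ∧
      W' = (cs.StandardParabolic J').map (MulAut.conj u).toMonoidHom)
    (hnt : ∃ x : W, x ≠ 1 ∧ x ∈ W' ⊓ cs.StandardParabolic J) :
    (∃ t : W, cs.IsCanonicalGenerator W' t ∧
        ((W' ⊓ cs.StandardParabolic J : Subgroup W) : Set W) = {1, t}) ∨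
      W' ≤ cs.StandardParabolic J := by
  classical
  obtain ⟨u, J', hcard, hW'⟩ := h
  obtain ⟨a, b, hab, rfl⟩ := Set.ncard_eq_two.mp hcard
  set D := cs.StandardParabolic {a, b} with hD
  obtain ⟨u₀, ⟨d₀, hd₀, hud₀⟩, hmin'⟩ := SE4.exists_min_coset cs {a, b} u
  have hmin : ∀ v : W, (∃ d ∈ D, u₀ * d = v) → cs.length u₀ ≤ cs.length v := by
    rintro v ⟨d, hd, rfl⟩
    exact hmin' _ ⟨d₀ * d, mul_mem hd₀ hd, by rw [← hud₀]; group⟩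
  have hconjapp : ∀ e : W, (MulAut.conj u).toMonoidHom e = u * e * u⁻¹ := fun e => rfl
  have hW'mem : ∀ x : W, x ∈ W' ↔ ∃ e ∈ D, u₀ * e * u₀⁻¹ = x := by
    intro x
    rw [hW', Subgroup.mem_map]
    constructor
    · rintro ⟨e, he, rfl⟩
      refine ⟨d₀⁻¹ * e * d₀, mul_mem (mul_mem (inv_mem hd₀) he) hd₀, ?_⟩
      rw [← hud₀, hconjapp]
      group
    · rintro ⟨e, he, rfl⟩
      refine ⟨d₀ * e * d₀⁻¹, mul_mem (mul_mem hd₀ he) (inv_mem hd₀), ?_⟩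
      rw [← hud₀, hconjapp]
      group
  have hconjmul : ∀ x y : W, u₀ * (x * y) * u₀⁻¹ = (u₀ * x * u₀⁻¹) * (u₀ * y * u₀⁻¹) := by
    intro x y; group
  have hsa : ∀ j ∈ ({a, b} : Set B), cs.simple j ∈ D :=
    fun j hj => Subgroup.subset_closure ⟨j, hj, rfl⟩
  by_cases hA : ∃ e : W, e ∈ D ∧ u₀ * e * u₀⁻¹ ∈ cs.StandardParabolic J ∧ 2 ≤ cs.length e
  · -- W' ≤ W_J
    right
    obtain ⟨e, heD, heJ, hlen⟩ := hA
    obtain ⟨ω, hred, hmem, hπ⟩ := SE4.exists_reduced_word_SP cs heD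
    have hωlen : 2 ≤ ω.length := by
      rw [← hred, hπ]
      exact hlen
    rcases ω with _ | ⟨c, ω₁⟩
    · simp at hωlen
    rcases ω₁ with _ | ⟨c', ω₂⟩
    · simp at hωlen
    have hc : c ∈ ({a, b} : Set B) := hmem c (by simp)
    have hc' : c' ∈ ({a, b} : Set B) := hmem c' (by simp)
    have hcc' : c ≠ c' := by
      rintro rfl
      have h2 := hred.take 2
      have htake : (c :: c :: ω₂).take 2 = [c, c] := rfl
      rw [htake] at h2
      have : cs.wordProd [c, c] = 1 := by
        rw [show [c, c] = [c] ++ [c] from rfl, cs.wordProd_append]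
        simp
      rw [CoxeterSystem.IsReduced, this] at h2
      simp at h2
    -- the two smallest left inversions of e
    have ht1mem : cs.simple c ∈ cs.leftInvSeq (c :: c' :: ω₂) := by
      show cs.simple c ∈ cs.simple c :: _
      exact List.mem_cons_self
    have ht2mem : cs.simple c * cs.simple c' * cs.simple c
        ∈ cs.leftInvSeq (c :: c' :: ω₂) := by
      show _ ∈ cs.simple c :: List.map (⇑(MulAut.conj (cs.simple c))) (cs.leftInvSeq (c' :: ω₂))
      apply List.mem_cons_of_mem
      apply List.mem_map.mpr
      refine ⟨cs.simple c', List.mem_cons_self, ?_⟩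
      rw [MulAut.conj_apply, cs.inv_simple]
    have hinv1 := cs.isLeftInversion_of_mem_leftInvSeq hred ht1mem
    have hinv2 := cs.isLeftInversion_of_mem_leftInvSeq hred ht2mem
    rw [hπ] at hinv1 hinv2
    have ht1D : cs.simple c ∈ D := hsa c hc
    have ht2D : cs.simple c * cs.simple c' * cs.simple c ∈ D :=
      mul_mem (mul_mem (hsa c hc) (hsa c' hc')) (hsa c hc)
    have hkey1 : u₀ * cs.simple c * u₀⁻¹ ∈ cs.Inversions (u₀ * e * u₀⁻¹) := by
      rw [SE4.inversions_conj cs hmin heD ht1D hinv1.1]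
      exact ⟨hinv1.1, hinv1.2⟩
    have hkey2 : u₀ * (cs.simple c * cs.simple c' * cs.simple c) * u₀⁻¹
        ∈ cs.Inversions (u₀ * e * u₀⁻¹) := by
      rw [SE4.inversions_conj cs hmin heD ht2D hinv2.1]
      exact ⟨hinv2.1, hinv2.2⟩
    have hSP1 : u₀ * cs.simple c * u₀⁻¹ ∈ cs.StandardParabolic J :=
      SE4.inversion_mem_SP cs heJ hkey1.1 hkey1.2
    have hSP2 : u₀ * (cs.simple c * cs.simple c' * cs.simple c) * u₀⁻¹
        ∈ cs.StandardParabolic J :=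
      SE4.inversion_mem_SP cs heJ hkey2.1 hkey2.2
    have hSPc' : u₀ * cs.simple c' * u₀⁻¹ ∈ cs.StandardParabolic J := by
      have hprod := mul_mem (mul_mem hSP1 hSP2) hSP1
      have heq : (u₀ * cs.simple c * u₀⁻¹)
          * (u₀ * (cs.simple c * cs.simple c' * cs.simple c) * u₀⁻¹)
          * (u₀ * cs.simple c * u₀⁻¹) = u₀ * cs.simple c' * u₀⁻¹ := by
        rw [← hconjmul, ← hconjmul]
        congr 1
        rw [show cs.simple c * (cs.simple c * cs.simple c' * cs.simple c) * cs.simple c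
          = cs.simple c * cs.simple c * cs.simple c' * (cs.simple c * cs.simple c) by group]
        simp
      rwa [heq] at hprod
    have hgen : ∀ j ∈ ({a, b} : Set B), u₀ * cs.simple j * u₀⁻¹ ∈ cs.StandardParabolic J := by
      intro j hj
      simp only [Set.mem_insert_iff, Set.mem_singleton_iff] at hc hc' hj
      rcases hc with rfl | rfl <;> rcases hc' with rfl | rfl <;> rcases hj with rfl | rfl <;>
        first
          | exact hSP1
          | exact hSPc'
          | exact (hcc' rfl).elim
    intro x hx
    obtain ⟨e', he', rfl⟩ := (hW'mem x).mp hx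
    clear hx
    induction he' using Subgroup.closure_induction with
    | mem y hy =>
      obtain ⟨j, hj, rfl⟩ := hy
      exact hgen j hj
    | one =>
      rw [show u₀ * 1 * u₀⁻¹ = 1 by group]
      exact one_mem _
    | mul y z hy hz ihy ihz =>
      rw [hconjmul]
      exact mul_mem ihy ihz
    | inv y hy ihy =>
      rw [show u₀ * y⁻¹ * u₀⁻¹ = (u₀ * y * u₀⁻¹)⁻¹ by group]
      exact inv_mem ihy
  · -- the intersection is {1, t} for a canonical generator t
    left
    push_neg at hA
    obtain ⟨x₀, hx₀ne, hx₀⟩ := hnt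
    obtain ⟨hx₀W', hx₀SP⟩ := Subgroup.mem_inf.mp hx₀
    obtain ⟨e₀, he₀D, he₀x⟩ := (hW'mem x₀).mp hx₀W'
    have he₀SP : u₀ * e₀ * u₀⁻¹ ∈ cs.StandardParabolic J := by rw [he₀x]; exact hx₀SP
    have he₀ne : e₀ ≠ 1 := by
      rintro rfl
      apply hx₀ne
      rw [← he₀x]
      group
    have hlen1 : cs.length e₀ = 1 := by
      have h1 : cs.length e₀ ≠ 0 := fun hh => he₀ne (cs.length_eq_zero_iff.mp hh)
      have h2 : cs.length e₀ < 2 := hA e₀ he₀D he₀SP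
      omega
    obtain ⟨c, hcJ', he₀c⟩ := SE4.simple_of_length_one_SP cs he₀D hlen1
    set t := u₀ * cs.simple c * u₀⁻¹ with htdef
    have htx₀ : t = x₀ := by rw [htdef, ← he₀x, he₀c]
    have htrefl : cs.IsReflection t := (cs.isReflection_simple c).conj u₀
    have htne : t ≠ 1 := by rw [htx₀]; exact hx₀ne
    have htpos : 0 < cs.length t := by
      rcases Nat.eq_zero_or_pos (cs.length t) with hh | hh
      · exact absurd (cs.length_eq_zero_iff.mp hh) htne
      · exact hh
    have htW' : t ∈ W' := (hW'mem t).mpr ⟨cs.simple c, hsa c hcJ', rfl⟩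
    have htSP : t ∈ cs.StandardParabolic J := by rw [htx₀]; exact hx₀SP
    refine ⟨t, ⟨htrefl, htW', ?_⟩, ?_⟩
    · -- canonical generator: Inversions t ∩ W' = {t}
      apply Set.eq_singleton_iff_unique_mem.mpr
      constructor
      · refine ⟨⟨htrefl, ?_⟩, htW'⟩
        rw [htrefl.mul_self, cs.length_one]
        exact htpos
      · rintro y ⟨⟨hyrefl, hylt⟩, hyW'⟩
        obtain ⟨d, hdD, rfl⟩ := (hW'mem y).mp hyW'
        have hdrefl : cs.IsReflection d := (cs.isReflection_conj_iff u₀ d).mp hyrefl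
        have hdinv : d ∈ cs.Inversions (cs.simple c) := by
          rw [← SE4.inversions_conj cs hmin (hsa c hcJ') hdD hdrefl]
          exact ⟨hyrefl, hylt⟩
        obtain ⟨-, hdlt⟩ := hdinv
        rw [cs.length_simple] at hdlt
        have hd1 : cs.length (d * cs.simple c) = 0 := by omega
        have : d * cs.simple c = 1 := cs.length_eq_zero_iff.mp hd1
        have hdc : d = cs.simple c := by
          have := congrArg (fun x => x * cs.simple c) this
          simpa using this
        rw [hdc]
    · -- the intersection is {1, t}
      ext y
      simp only [SetLike.mem_coe, Subgroup.mem_inf, Set.mem_insert_iff, Set.mem_singleton_iff]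
      constructor
      · rintro ⟨hyW', hySP⟩
        obtain ⟨d, hdD, rfl⟩ := (hW'mem y).mp hyW'
        by_cases hd1 : d = 1
        · left; rw [hd1]; group
        · right
          have hlend : cs.length d = 1 := by
            have h1 : cs.length d ≠ 0 := fun hh => hd1 (cs.length_eq_zero_iff.mp hh)
            have h2 : cs.length d < 2 := hA d hdD hySP
            omega
          obtain ⟨c', hc'J', hdc'⟩ := SE4.simple_of_length_one_SP cs hdD hlend
          by_cases hcc' : cs.simple c' = cs.simple c
          · rw [hdc', hcc']
          · exfalso
            set e' := cs.simple c * cs.simple c' with he'def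
            have he'D : e' ∈ D := mul_mem (hsa c hcJ') (hsa c' hc'J')
            have he'SP : u₀ * e' * u₀⁻¹ ∈ cs.StandardParabolic J := by
              rw [he'def, hconjmul]
              exact mul_mem htSP (by rw [← hdc']; exact hySP)
            have hlt2 : cs.length e' < 2 := hA e' he'D he'SP
            rcases cs.length_mul_simple (cs.simple c) c' with hh | hh
            · rw [cs.length_simple] at hh
              rw [he'def] at hlt2
              omega
            · rw [cs.length_simple] at hh
              have h0 : cs.length (cs.simple c * cs.simple c') = 0 := by omega
              have h1 : cs.simple c * cs.simple c' = 1 := cs.length_eq_zero_iff.mp h0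
              apply hcc'
              have := congrArg (fun x => cs.simple c * x) h1
              simpa using this
      · rintro (rfl | rfl)
        · exact ⟨one_mem _, one_mem _⟩
        · exact ⟨htW', htSP⟩
end
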